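/- arXiv:1806.10914 — 6 statements merged into one kernel-verified Lean document; each statement's English description precedes it below -/
import Mathlib

section
/- Let R₀¹ < R₀², δ¹, δ² > 0, λ¹, λ² > 0 and γʲ = λʲ/δʲ. Define the probability measure μ on [R₀¹, R₀²] × {1, 2} by μ(dr, 1) = ρ¹(r) dr and μ(dr, 2) = ρ²(r) dr, where ρ¹(r) = C (r − R₀¹)^{γ¹−1} (R₀² − r)^{γ²}, ρ²(r) = C (δ¹/δ²) (r − R₀¹)^{γ¹} (R₀² − r)^{γ²−1}, and C > 0 is the normalizing constant making μ a probability measure. Then for every function f : [R₀¹, R₀²] × {1, 2} → ℝ that is continuously differentiable in its first variable, ∫ L f dμ = 0, where L f(r, i) = δⁱ (R₀ⁱ − r) ∂_r f(r, i) + λⁱ (f(r, ī) − f(r, i)) and ī denotes the element of {1, 2} other than i. In other words, μ is an invariant (stationary) measure for the generator L of the one-species PDMP restricted to the extinction set. -/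
/- With the weight `w(r) = δ¹ C (r − R₀¹)^γ¹ (R₀² − r)^γ²` one has
`δ¹(R₀¹ − r) ρ¹ = −w = −δ²(R₀² − r) ρ²` and `λ¹ρ¹ − λ²ρ² = w'`, so the integrand `(L f) ρ` is the
derivative of the flux `Φ = w (f₂ − f₁)`. As `w` vanishes at both endpoints,
`∫ (L f) ρ = Φ(R₀²) − Φ(R₀¹) = 0`. -/

open MeasureTheory intervalIntegral

/-- Density on state 1 of the invariant measure:
`ρ¹(r) = C (r − R₀¹)^(γ¹−1) (R₀² − r)^(γ²)`. -/
noncomputable def rho1 (C R01 R02 γ1 γ2 r : ℝ) : ℝ :=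
  C * (r - R01) ^ (γ1 - 1) * (R02 - r) ^ γ2

/-- Density on state 2 of the invariant measure:
`ρ²(r) = C (δ¹/δ²) (r − R₀¹)^(γ¹) (R₀² − r)^(γ²−1)`. -/
noncomputable def rho2 (C δ1 δ2 R01 R02 γ1 γ2 r : ℝ) : ℝ :=
  C * (δ1 / δ2) * (r - R01) ^ γ1 * (R02 - r) ^ (γ2 - 1)

open Set Real

theorem hasDerivAt_rpow_sub_mul_rpow_sub {a b r : ℝ} (p q : ℝ) (hr : r ∈ Ioo a b) :
    HasDerivAt (fun r => (r - a) ^ p * (b - r) ^ q)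
      (p * (r - a) ^ (p - 1) * (b - r) ^ q - q * (r - a) ^ p * (b - r) ^ (q - 1)) r := by
  have hx : r - a ≠ 0 := (sub_pos.2 hr.1).ne'
  have hy : b - r ≠ 0 := (sub_pos.2 hr.2).ne'
  have h1 := ((hasDerivAt_id r).sub_const a).rpow_const (p := p) (Or.inl hx)
  have h2 := ((hasDerivAt_id r).const_sub b).rpow_const (p := q) (Or.inl hy)
  refine (h1.fun_mul h2).congr_deriv ?_
  simp only [id]
  ring

theorem hasDerivAt_flux {a b δ1 δ2 l1 l2 C r f1' f2' : ℝ} {f1 f2 : ℝ → ℝ}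
    (hδ1 : δ1 ≠ 0) (hδ2 : δ2 ≠ 0) (hr : r ∈ Ioo a b)
    (hf1 : HasDerivAt f1 f1' r) (hf2 : HasDerivAt f2 f2' r) :
    HasDerivAt (fun r => δ1 * C * ((r - a) ^ (l1 / δ1) * (b - r) ^ (l2 / δ2)) * (f2 r - f1 r))
      ((δ1 * (a - r) * f1' + l1 * (f2 r - f1 r)) * rho1 C a b (l1 / δ1) (l2 / δ2) r
        + (δ2 * (b - r) * f2' + l2 * (f1 r - f2 r)) * rho2 C δ1 δ2 a b (l1 / δ1) (l2 / δ2) r)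
      r := by
  have hx : r - a ≠ 0 := (sub_pos.2 hr.1).ne'
  have hy : b - r ≠ 0 := (sub_pos.2 hr.2).ne'
  refine (((hasDerivAt_rpow_sub_mul_rpow_sub (l1 / δ1) (l2 / δ2) hr).const_mul
    (δ1 * C)).fun_mul (hf2.fun_sub hf1)).congr_deriv ?_
  simp only [rho1, rho2, rpow_sub_one hx, rpow_sub_one hy]
  field_simp
  ring

theorem intervalIntegrable_rho1 {a b γ1 γ2 : ℝ} (C : ℝ) (hγ1 : 0 < γ1) (hγ2 : 0 ≤ γ2) :
    IntervalIntegrable (rho1 C a b γ1 γ2) volume a b := by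
  have hsing : IntervalIntegrable (fun r => (r - a) ^ (γ1 - 1)) volume a b := by
    simpa using (intervalIntegrable_rpow' (a := 0) (b := b - a) (r := γ1 - 1)
      (by linarith)).comp_sub_right a
  have hcont : Continuous fun r : ℝ => C * (b - r) ^ γ2 := by fun_prop (disch := exact hγ2)
  convert hsing.mul_continuousOn hcont.continuousOn using 1
  funext r
  simp only [rho1]
  ring

theorem intervalIntegrable_rho2 {a b γ1 γ2 : ℝ} (C δ1 δ2 : ℝ) (hγ1 : 0 ≤ γ1) (hγ2 : 0 < γ2) :
    IntervalIntegrable (rho2 C δ1 δ2 a b γ1 γ2) volume a b := by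
  have hsing : IntervalIntegrable (fun r => (b - r) ^ (γ2 - 1)) volume a b := by
    simpa using ((intervalIntegrable_rpow' (a := 0) (b := b - a) (r := γ2 - 1)
      (by linarith)).comp_sub_left b).symm
  have hcont : Continuous fun r : ℝ => C * (δ1 / δ2) * (r - a) ^ γ1 := by
    fun_prop (disch := exact hγ1)
  convert hsing.mul_continuousOn hcont.continuousOn using 1
  funext r
  simp only [rho2]
  ring

theorem stmt6_general (R01 R02 δ1 δ2 l1 l2 C : ℝ)
    (hR : R01 < R02) (hδ1 : 0 < δ1) (hδ2 : 0 < δ2)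
    (hl1 : 0 < l1) (hl2 : 0 < l2)
    (f1 f2 : ℝ → ℝ) (hf1 : ContDiff ℝ 1 f1) (hf2 : ContDiff ℝ 1 f2) :
    ∫ r in R01..R02,
      ((δ1 * (R01 - r) * deriv f1 r + l1 * (f2 r - f1 r))
          * rho1 C R01 R02 (l1 / δ1) (l2 / δ2) r
        + (δ2 * (R02 - r) * deriv f2 r + l2 * (f1 r - f2 r))
          * rho2 C δ1 δ2 R01 R02 (l1 / δ1) (l2 / δ2) r) = 0 := by
  have hγ1 : 0 < l1 / δ1 := div_pos hl1 hδ1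
  have hγ2 : 0 < l2 / δ2 := div_pos hl2 hδ2
  have hd1 := hf1.differentiable one_ne_zero
  have hd2 := hf2.differentiable one_ne_zero
  have := hf1.continuous
  have := hf2.continuous
  have hflux : Continuous fun r =>
      δ1 * C * ((r - R01) ^ (l1 / δ1) * (R02 - r) ^ (l2 / δ2)) * (f2 r - f1 r) := by
    fun_prop (disch := positivity)
  have hint := ((intervalIntegrable_rho1 (a := R01) (b := R02) C hγ1 hγ2.le).continuousOn_mul
      (g := fun r => δ1 * (R01 - r) * deriv f1 r + l1 * (f2 r - f1 r))
      (by fun_prop : Continuous _).continuousOn).add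
    ((intervalIntegrable_rho2 (a := R01) (b := R02) C δ1 δ2 hγ1.le hγ2).continuousOn_mul
      (g := fun r => δ2 * (R02 - r) * deriv f2 r + l2 * (f1 r - f2 r))
      (by fun_prop : Continuous _).continuousOn)
  rw [integral_eq_sub_of_hasDeriv_right_of_le hR.le hflux.continuousOn
    (fun r hr => (hasDerivAt_flux hδ1.ne' hδ2.ne' hr
      (hd1 r).hasDerivAt (hd2 r).hasDerivAt).hasDerivWithinAt) hint]
  simp [zero_rpow hγ1.ne', zero_rpow hγ2.ne']

/-- The measure with densities `(ρ¹, ρ²)` is invariant for the generator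
`L f(r,i) = δⁱ(R₀ⁱ − r) ∂_r f(r,i) + λⁱ(f(r,ī) − f(r,i))` of the
one-species PDMP restricted to the extinction set: `∫ L f dμ = 0`. -/
theorem stmt6 (R01 R02 δ1 δ2 l1 l2 C : ℝ)
    (hR : R01 < R02) (hδ1 : 0 < δ1) (hδ2 : 0 < δ2)
    (hl1 : 0 < l1) (hl2 : 0 < l2) (hC : 0 < C)
    -- `C` is the normalizing constant making `μ` a probability measure
    (hnorm : ∫ r in R01..R02,
        (rho1 C R01 R02 (l1 / δ1) (l2 / δ2) r
          + rho2 C δ1 δ2 R01 R02 (l1 / δ1) (l2 / δ2) r) = 1)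
    (f1 f2 : ℝ → ℝ) (hf1 : ContDiff ℝ 1 f1) (hf2 : ContDiff ℝ 1 f2) :
    ∫ r in R01..R02,
      ((δ1 * (R01 - r) * deriv f1 r + l1 * (f2 r - f1 r))
          * rho1 C R01 R02 (l1 / δ1) (l2 / δ2) r
        + (δ2 * (R02 - r) * deriv f2 r + l2 * (f1 r - f2 r))
          * rho2 C δ1 δ2 R01 R02 (l1 / δ1) (l2 / δ2) r) = 0 :=
  stmt6_general R01 R02 δ1 δ2 l1 l2 C hR hδ1 hδ2 hl1 hl2 f1 f2 hf1 hf2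
end

section
/- Let R₀¹ < R₀², δ¹, δ² > 0, λ¹, λ² > 0, γʲ = λʲ/δʲ, and let ρ¹(r) = C (r − R₀¹)^{γ¹−1}(R₀² − r)^{γ²} and ρ²(r) = C (δ¹/δ²)(r − R₀¹)^{γ¹}(R₀² − r)^{γ²−1} with C > 0 the constant such that ∫_{R₀¹}^{R₀²} (ρ¹ + ρ²) dr = 1. Let f_w¹, f_w² be Monod functions. Then the invasion rate Λ_w⁰ := ∫_{R₀¹}^{R₀²} (f_w¹(r) − δ¹) ρ¹(r) dr + ∫_{R₀¹}^{R₀²} (f_w²(r) − δ²) ρ²(r) dr satisfies Λ_w⁰ = ((γ¹ + γ²)/(λ¹ + λ²)) · E[Φ(B)], where B is a Beta(γ¹, γ²) random variable and Φ(x) = δ²(1 − x)(f_w¹((R₀² − R₀¹)x + R₀¹) − δ¹) + δ¹ x (f_w²((R₀² − R₀¹)x + R₀¹) − δ²). -/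
open MeasureTheory intervalIntegral

/-- Monod consumption function `f(R) = aR/(b+R)`. -/
noncomputable def monod (a b r : ℝ) : ℝ := a * r / (b + r)

/-- `Φ(x) = δ²(1−x)(f¹((R₀²−R₀¹)x+R₀¹)−δ¹) + δ¹x(f²((R₀²−R₀¹)x+R₀¹)−δ²)`. -/
noncomputable def Phi (a1 b1 a2 b2 δ1 δ2 R01 R02 x : ℝ) : ℝ :=
  δ2 * (1 - x) * (monod a1 b1 ((R02 - R01) * x + R01) - δ1)
    + δ1 * x * (monod a2 b2 ((R02 - R01) * x + R01) - δ2)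

/-!
Substituting `r = R₀¹ + (R₀² - R₀¹) x` turns `ρ¹` and `ρ²` into `C (R₀² - R₀¹)^(γ¹+γ²)` times the
Beta kernels `x^(γ¹-1) (1-x)^γ²` and `(δ¹/δ²) x^γ¹ (1-x)^(γ²-1)`, whose integrals are
`B(γ¹, γ²+1) = γ²/(γ¹+γ²) B(γ¹, γ²)` and `B(γ¹+1, γ²) = γ¹/(γ¹+γ²) B(γ¹, γ²)` by `Γ(s+1) = s Γ(s)`.
So the normalisation pins `C (R₀² - R₀¹)^(γ¹+γ²) B(γ¹, γ²) = δ² (γ¹+γ²)/(λ¹+λ²)`. Both kernels are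
`1-x` resp. `x` times `x^(γ¹-1) (1-x)^(γ²-1)`, so the invasion rate is that constant times
`(1/δ²) ∫ Φ(x) x^(γ¹-1) (1-x)^(γ²-1) dx`.
-/

open ProbabilityTheory

lemma Real.mul_rpow_sub_one {x p : ℝ} (hx : 0 ≤ x) (hp : p ≠ 0) : x * x ^ (p - 1) = x ^ p := by
  rw [← Real.rpow_one_add' hx (by simpa using hp)]
  ring_nf

lemma Complex.ofReal_rpow_mul_one_sub_rpow {x : ℝ} (hx : x ∈ Set.Icc (0 : ℝ) 1) (p q : ℝ) :
    ((x ^ (p - 1) * (1 - x) ^ (q - 1) : ℝ) : ℂ)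
      = (x : ℂ) ^ ((p : ℂ) - 1) * (1 - (x : ℂ)) ^ ((q : ℂ) - 1) := by
  rw [Complex.ofReal_mul, Complex.ofReal_cpow hx.1, Complex.ofReal_cpow (sub_nonneg.2 hx.2)]
  push_cast
  rfl

lemma intervalIntegrable_rpow_mul_one_sub_rpow {p q : ℝ} (hp : 0 < p) (hq : 0 < q) :
    IntervalIntegrable (fun x : ℝ => x ^ (p - 1) * (1 - x) ^ (q - 1)) volume 0 1 := by
  have h := Complex.betaIntegral_convergent (u := p) (v := q) (by simpa) (by simpa)
  rw [intervalIntegrable_iff_integrableOn_Ioc_of_le zero_le_one] at h ⊢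
  refine IntegrableOn.congr_fun h.re (fun x hx => ?_) measurableSet_Ioc
  rw [← Complex.ofReal_rpow_mul_one_sub_rpow (Set.Ioc_subset_Icc_self hx)]
  rfl

lemma integral_rpow_mul_one_sub_rpow_eq_beta {p q : ℝ} (hp : 0 < p) (hq : 0 < q) :
    ∫ x in (0 : ℝ)..1, x ^ (p - 1) * (1 - x) ^ (q - 1) = beta p q := by
  apply Complex.ofReal_injective
  rw [← intervalIntegral.integral_ofReal, beta, Complex.ofReal_div, Complex.ofReal_mul,
    ← Complex.Gamma_ofReal, ← Complex.Gamma_ofReal, ← Complex.Gamma_ofReal, Complex.ofReal_add,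
    ← Complex.betaIntegral_eq_Gamma_mul_div _ _ (by simpa) (by simpa)]
  refine integral_congr fun x hx => ?_
  rw [Set.uIcc_of_le zero_le_one] at hx
  exact Complex.ofReal_rpow_mul_one_sub_rpow hx p q

lemma ProbabilityTheory.beta_add_one_left {p q : ℝ} (hp : 0 < p) (hq : 0 < q) :
    beta (p + 1) q = p / (p + q) * beta p q := by
  simp only [beta, add_right_comm p 1 q, Real.Gamma_add_one hp.ne',
    Real.Gamma_add_one (add_pos hp hq).ne']
  have := Real.Gamma_pos_of_pos (add_pos hp hq)
  field_simp

lemma ProbabilityTheory.beta_add_one_right {p q : ℝ} (hp : 0 < p) (hq : 0 < q) :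
    beta p (q + 1) = q / (p + q) * beta p q := by
  simp only [beta, ← add_assoc, Real.Gamma_add_one hq.ne', Real.Gamma_add_one (add_pos hp hq).ne']
  have := Real.Gamma_pos_of_pos (add_pos hp hq)
  field_simp

lemma integral_mul_rpow_mul_one_sub_rpow_split {p q c₁ c₂ : ℝ} {g₁ g₂ : ℝ → ℝ}
    (hp : 0 < p) (hq : 0 < q)
    (hg₁ : ContinuousOn g₁ (Set.Icc 0 1)) (hg₂ : ContinuousOn g₂ (Set.Icc 0 1)) :
    ∫ x in (0 : ℝ)..1, (c₁ * (1 - x) * g₁ x + c₂ * x * g₂ x) * (x ^ (p - 1) * (1 - x) ^ (q - 1))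
      = c₁ * (∫ x in (0 : ℝ)..1, g₁ x * (x ^ (p - 1) * (1 - x) ^ q))
        + c₂ * ∫ x in (0 : ℝ)..1, g₂ x * (x ^ p * (1 - x) ^ (q - 1)) := by
  rw [← Set.uIcc_of_le zero_le_one] at hg₁ hg₂
  have h₁ : IntervalIntegrable (fun x => g₁ x * (x ^ (p - 1) * (1 - x) ^ q)) volume 0 1 := by
    simpa using
      (intervalIntegrable_rpow_mul_one_sub_rpow hp (by linarith : 0 < q + 1)).continuousOn_mul hg₁
  have h₂ : IntervalIntegrable (fun x => g₂ x * (x ^ p * (1 - x) ^ (q - 1))) volume 0 1 := by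
    simpa using
      (intervalIntegrable_rpow_mul_one_sub_rpow (by linarith : 0 < p + 1) hq).continuousOn_mul hg₂
  rw [← intervalIntegral.integral_const_mul, ← intervalIntegral.integral_const_mul,
    ← intervalIntegral.integral_add (h₁.const_mul _) (h₂.const_mul _)]
  refine integral_congr fun x hx => ?_
  rw [Set.uIcc_of_le zero_le_one] at hx
  have hx₁ := Real.mul_rpow_sub_one hx.1 hp.ne'
  have hx₂ := Real.mul_rpow_sub_one (sub_nonneg.2 hx.2) hq.ne'
  linear_combination c₁ * g₁ x * x ^ (p - 1) * hx₂ + c₂ * g₂ x * (1 - x) ^ (q - 1) * hx₁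

lemma intervalIntegral.integral_eq_sub_mul_integral_comp_zero_one (a b : ℝ) (g : ℝ → ℝ) :
    ∫ r in a..b, g r = (b - a) * ∫ x in (0 : ℝ)..1, g ((b - a) * x + a) := by
  rw [← smul_eq_mul, smul_integral_comp_mul_add]
  congr 1 <;> ring

lemma ContinuousOn.comp_affine_zero_one {a b : ℝ} {f : ℝ → ℝ} (hf : ContinuousOn f (Set.Icc a b))
    (hab : a ≤ b) : ContinuousOn (fun x => f ((b - a) * x + a)) (Set.Icc 0 1) :=
  hf.comp (by fun_prop) fun x hx => by
    have := mul_le_mul_of_nonneg_left hx.2 (sub_nonneg.2 hab)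
    have := mul_nonneg (sub_nonneg.2 hab) hx.1
    constructor <;> linarith

lemma continuousOn_monod {a b : ℝ} (hb : 0 < b) : ContinuousOn (monod a b) (Set.Ici 0) :=
  (continuousOn_const.mul continuousOn_id).div (continuousOn_const.add continuousOn_id)
    fun r (hr : 0 ≤ r) => by positivity

section Densities

variable {C δ1 δ2 R01 R02 γ1 γ2 : ℝ}

lemma sub_mul_rho1_comp_affine (hR : R01 < R02) {x : ℝ} (hx : x ∈ Set.Icc (0 : ℝ) 1) :
    (R02 - R01) * rho1 C R01 R02 γ1 γ2 ((R02 - R01) * x + R01)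
      = C * (R02 - R01) ^ (γ1 + γ2) * (x ^ (γ1 - 1) * (1 - x) ^ γ2) := by
  have hΔ : 0 < R02 - R01 := sub_pos.2 hR
  rw [rho1, show (R02 - R01) * x + R01 - R01 = (R02 - R01) * x by ring,
    show R02 - ((R02 - R01) * x + R01) = (R02 - R01) * (1 - x) by ring,
    Real.mul_rpow hΔ.le hx.1, Real.mul_rpow hΔ.le (sub_nonneg.2 hx.2),
    show γ1 + γ2 = 1 + (γ1 - 1) + γ2 by ring, Real.rpow_add hΔ, Real.rpow_add hΔ, Real.rpow_one]
  ring

lemma sub_mul_rho2_comp_affine (hR : R01 < R02) {x : ℝ} (hx : x ∈ Set.Icc (0 : ℝ) 1) :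
    (R02 - R01) * rho2 C δ1 δ2 R01 R02 γ1 γ2 ((R02 - R01) * x + R01)
      = C * (δ1 / δ2) * (R02 - R01) ^ (γ1 + γ2) * (x ^ γ1 * (1 - x) ^ (γ2 - 1)) := by
  have hΔ : 0 < R02 - R01 := sub_pos.2 hR
  rw [rho2, show (R02 - R01) * x + R01 - R01 = (R02 - R01) * x by ring,
    show R02 - ((R02 - R01) * x + R01) = (R02 - R01) * (1 - x) by ring,
    Real.mul_rpow hΔ.le hx.1, Real.mul_rpow hΔ.le (sub_nonneg.2 hx.2),
    show γ1 + γ2 = 1 + γ1 + (γ2 - 1) by ring, Real.rpow_add hΔ, Real.rpow_add hΔ, Real.rpow_one]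
  ring

lemma integral_mul_rho1 (hR : R01 < R02) (g : ℝ → ℝ) :
    ∫ r in R01..R02, g r * rho1 C R01 R02 γ1 γ2 r
      = C * (R02 - R01) ^ (γ1 + γ2)
        * ∫ x in (0 : ℝ)..1, g ((R02 - R01) * x + R01) * (x ^ (γ1 - 1) * (1 - x) ^ γ2) := by
  rw [integral_eq_sub_mul_integral_comp_zero_one, ← intervalIntegral.integral_const_mul,
    ← intervalIntegral.integral_const_mul]
  refine integral_congr fun x hx => ?_
  rw [Set.uIcc_of_le zero_le_one] at hx
  linear_combination g ((R02 - R01) * x + R01) * sub_mul_rho1_comp_affine (C := C) hR hx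

lemma integral_mul_rho2 (hR : R01 < R02) (g : ℝ → ℝ) :
    ∫ r in R01..R02, g r * rho2 C δ1 δ2 R01 R02 γ1 γ2 r
      = C * (δ1 / δ2) * (R02 - R01) ^ (γ1 + γ2)
        * ∫ x in (0 : ℝ)..1, g ((R02 - R01) * x + R01) * (x ^ γ1 * (1 - x) ^ (γ2 - 1)) := by
  rw [integral_eq_sub_mul_integral_comp_zero_one, ← intervalIntegral.integral_const_mul,
    ← intervalIntegral.integral_const_mul]
  refine integral_congr fun x hx => ?_
  rw [Set.uIcc_of_le zero_le_one] at hx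
  linear_combination
    g ((R02 - R01) * x + R01) * sub_mul_rho2_comp_affine (C := C) (δ1 := δ1) (δ2 := δ2) hR hx

lemma integral_rho1_add_rho2 (hR : R01 < R02) (hγ1 : 0 < γ1) (hγ2 : 0 < γ2) :
    ∫ r in R01..R02, (rho1 C R01 R02 γ1 γ2 r + rho2 C δ1 δ2 R01 R02 γ1 γ2 r)
      = C * (R02 - R01) ^ (γ1 + γ2) * beta γ1 γ2 * (γ2 + δ1 / δ2 * γ1) / (γ1 + γ2) := by
  have h₁ : IntervalIntegrable (fun x : ℝ => x ^ (γ1 - 1) * (1 - x) ^ γ2) volume 0 1 := by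
    simpa using intervalIntegrable_rpow_mul_one_sub_rpow hγ1 (by linarith : 0 < γ2 + 1)
  have h₂ : IntervalIntegrable (fun x : ℝ => x ^ γ1 * (1 - x) ^ (γ2 - 1)) volume 0 1 := by
    simpa using intervalIntegrable_rpow_mul_one_sub_rpow (by linarith : 0 < γ1 + 1) hγ2
  have hB₁ : ∫ x in (0 : ℝ)..1, x ^ (γ1 - 1) * (1 - x) ^ γ2 = beta γ1 (γ2 + 1) := by
    simpa using integral_rpow_mul_one_sub_rpow_eq_beta hγ1 (by linarith : 0 < γ2 + 1)
  have hB₂ : ∫ x in (0 : ℝ)..1, x ^ γ1 * (1 - x) ^ (γ2 - 1) = beta (γ1 + 1) γ2 := by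
    simpa using integral_rpow_mul_one_sub_rpow_eq_beta (by linarith : 0 < γ1 + 1) hγ2
  have hsplit : Set.EqOn
      (fun x => (R02 - R01) * (rho1 C R01 R02 γ1 γ2 ((R02 - R01) * x + R01)
        + rho2 C δ1 δ2 R01 R02 γ1 γ2 ((R02 - R01) * x + R01)))
      (fun x => C * (R02 - R01) ^ (γ1 + γ2) * (x ^ (γ1 - 1) * (1 - x) ^ γ2)
        + C * (δ1 / δ2) * (R02 - R01) ^ (γ1 + γ2) * (x ^ γ1 * (1 - x) ^ (γ2 - 1)))
      (Set.uIcc 0 1) := fun x hx => by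
    rw [Set.uIcc_of_le zero_le_one] at hx
    beta_reduce
    rw [mul_add, sub_mul_rho1_comp_affine hR hx, sub_mul_rho2_comp_affine hR hx]
  rw [integral_eq_sub_mul_integral_comp_zero_one, ← intervalIntegral.integral_const_mul,
    integral_congr hsplit, intervalIntegral.integral_add (h₁.const_mul _) (h₂.const_mul _),
    intervalIntegral.integral_const_mul, intervalIntegral.integral_const_mul, hB₁, hB₂,
    beta_add_one_left hγ1 hγ2, beta_add_one_right hγ1 hγ2]
  field_simp

theorem invasion_rate_eq_mul_beta_expectation {f1 f2 : ℝ → ℝ}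
    (hR : R01 < R02) (hδ1 : 0 < δ1) (hδ2 : 0 < δ2) (hγ1 : 0 < γ1) (hγ2 : 0 < γ2)
    (hf1 : ContinuousOn f1 (Set.Icc R01 R02)) (hf2 : ContinuousOn f2 (Set.Icc R01 R02))
    (hnorm : ∫ r in R01..R02, (rho1 C R01 R02 γ1 γ2 r + rho2 C δ1 δ2 R01 R02 γ1 γ2 r) = 1) :
    (∫ r in R01..R02, (f1 r - δ1) * rho1 C R01 R02 γ1 γ2 r)
      + (∫ r in R01..R02, (f2 r - δ2) * rho2 C δ1 δ2 R01 R02 γ1 γ2 r)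
    = ((γ1 + γ2) / (δ1 * γ1 + δ2 * γ2)) *
      ((∫ x in (0 : ℝ)..1, (δ2 * (1 - x) * (f1 ((R02 - R01) * x + R01) - δ1)
          + δ1 * x * (f2 ((R02 - R01) * x + R01) - δ2)) * (x ^ (γ1 - 1) * (1 - x) ^ (γ2 - 1)))
        / ∫ x in (0 : ℝ)..1, x ^ (γ1 - 1) * (1 - x) ^ (γ2 - 1)) := by
  have hg1 : ContinuousOn (fun x => f1 ((R02 - R01) * x + R01) - δ1) (Set.Icc 0 1) :=
    (hf1.comp_affine_zero_one hR.le).sub continuousOn_const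
  have hg2 : ContinuousOn (fun x => f2 ((R02 - R01) * x + R01) - δ2) (Set.Icc 0 1) :=
    (hf2.comp_affine_zero_one hR.le).sub continuousOn_const
  rw [integral_mul_rho1 hR, integral_mul_rho2 hR,
    integral_mul_rpow_mul_one_sub_rpow_split hγ1 hγ2 hg1 hg2,
    integral_rpow_mul_one_sub_rpow_eq_beta hγ1 hγ2]
  rw [integral_rho1_add_rho2 hR hγ1 hγ2] at hnorm
  have hB := beta_pos hγ1 hγ2
  have hrate : 0 < δ1 * γ1 + δ2 * γ2 := by positivity
  generalize ∫ x in (0 : ℝ)..1, (f1 ((R02 - R01) * x + R01) - δ1) * (x ^ (γ1 - 1) * (1 - x) ^ γ2)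
    = I₁
  generalize ∫ x in (0 : ℝ)..1, (f2 ((R02 - R01) * x + R01) - δ2) * (x ^ γ1 * (1 - x) ^ (γ2 - 1))
    = I₂
  field_simp at hnorm ⊢
  linear_combination (δ2 * I₁ + δ1 * I₂) * hnorm

end Densities

theorem stmt7_general (R01 R02 δ1 δ2 l1 l2 C a1 b1 a2 b2 : ℝ)
    (hR01 : 0 < R01) (hR : R01 < R02) (hδ1 : 0 < δ1) (hδ2 : 0 < δ2)
    (hl1 : 0 < l1) (hl2 : 0 < l2)
    (hb1 : 0 < b1) (hb2 : 0 < b2)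
    -- `C` is the normalizing constant
    (hnorm : ∫ r in R01..R02,
        (rho1 C R01 R02 (l1 / δ1) (l2 / δ2) r
          + rho2 C δ1 δ2 R01 R02 (l1 / δ1) (l2 / δ2) r) = 1) :
    (∫ r in R01..R02,
        (monod a1 b1 r - δ1) * rho1 C R01 R02 (l1 / δ1) (l2 / δ2) r)
      + (∫ r in R01..R02,
        (monod a2 b2 r - δ2) * rho2 C δ1 δ2 R01 R02 (l1 / δ1) (l2 / δ2) r)
    = ((l1 / δ1 + l2 / δ2) / (l1 + l2)) *
      ((∫ x in (0:ℝ)..1, Phi a1 b1 a2 b2 δ1 δ2 R01 R02 x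
          * (x ^ (l1 / δ1 - 1) * (1 - x) ^ (l2 / δ2 - 1)))
        / (∫ x in (0:ℝ)..1, x ^ (l1 / δ1 - 1) * (1 - x) ^ (l2 / δ2 - 1))) := by
  have hmonod : ∀ {a b : ℝ}, 0 < b → ContinuousOn (monod a b) (Set.Icc R01 R02) :=
    fun hb => (continuousOn_monod hb).mono fun r hr => hR01.le.trans hr.1
  have hrate : δ1 * (l1 / δ1) + δ2 * (l2 / δ2) = l1 + l2 := by field_simp
  simpa only [Phi, hrate] using invasion_rate_eq_mul_beta_expectation hR hδ1 hδ2
    (div_pos hl1 hδ1) (div_pos hl2 hδ2) (hmonod hb1) (hmonod hb2) hnorm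

/-- The invasion rate `Λ_w⁰` equals `((γ¹+γ²)/(λ¹+λ²)) E[Φ(B)]`, `B ∼ Beta(γ¹,γ²)`. -/
theorem stmt7 (R01 R02 δ1 δ2 l1 l2 C a1 b1 a2 b2 : ℝ)
    (hR01 : 0 < R01) (hR : R01 < R02) (hδ1 : 0 < δ1) (hδ2 : 0 < δ2)
    (hl1 : 0 < l1) (hl2 : 0 < l2) (hC : 0 < C)
    (ha1 : 0 < a1) (hb1 : 0 < b1) (ha2 : 0 < a2) (hb2 : 0 < b2)
    -- `C` is the normalizing constant
    (hnorm : ∫ r in R01..R02,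
        (rho1 C R01 R02 (l1 / δ1) (l2 / δ2) r
          + rho2 C δ1 δ2 R01 R02 (l1 / δ1) (l2 / δ2) r) = 1) :
    (∫ r in R01..R02,
        (monod a1 b1 r - δ1) * rho1 C R01 R02 (l1 / δ1) (l2 / δ2) r)
      + (∫ r in R01..R02,
        (monod a2 b2 r - δ2) * rho2 C δ1 δ2 R01 R02 (l1 / δ1) (l2 / δ2) r)
    = ((l1 / δ1 + l2 / δ2) / (l1 + l2)) *
      ((∫ x in (0:ℝ)..1, Phi a1 b1 a2 b2 δ1 δ2 R01 R02 x
          * (x ^ (l1 / δ1 - 1) * (1 - x) ^ (l2 / δ2 - 1)))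
        / (∫ x in (0:ℝ)..1, x ^ (l1 / δ1 - 1) * (1 - x) ^ (l2 / δ2 - 1))) :=
  stmt7_general R01 R02 δ1 δ2 l1 l2 C a1 b1 a2 b2 hR01 hR hδ1 hδ2 hl1 hl2 hb1 hb2 hnorm
end

section
/- (Convex order between Beta laws.) Let X and X' be random variables following Beta laws of parameters (a, b) and (a', b') respectively, with a, b, a', b' > 0. If a < a', b < b' and a/(a + b) = a'/(a' + b'), then for every convex function φ : [0,1] → ℝ one has E[φ(X')] ≤ E[φ(X)]. -/
/-!
Write `p, q` for the normalised densities of `Beta(a', b')` and `Beta(a, b)` and `h = p - q`.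
Both laws have total mass one and, by the hypothesis on the means, the same first moment, so
`∫ h = ∫ x h = 0` and hence `∫ φ h = ∫ (φ - ℓ) h` for every affine `ℓ`. The log-likelihood ratio
`log p - log q = log (B(a,b)/B(a',b')) + (a' - a) log x + (b' - b) log (1 - x)` is concave and
tends to `-∞` at both ends. If it is positive somewhere, it vanishes at two points `t₁ < t₂`,
is nonnegative between them and nonpositive outside; the chord `ℓ` of `φ` over `[t₁, t₂]` makes
`ℓ - φ` concave with the same zeros, hence with the same sign pattern, so `(φ - ℓ) h ≤ 0`.
Otherwise `h ≤ 0` and a constant minorant of `φ` serves as `ℓ`. Either way `∫ φ h ≤ 0`.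
-/

open Real Set Filter Topology MeasureTheory
open ProbabilityTheory (beta beta_pos beta_eq_betaIntegralReal)

section Convexity

variable {s : Set ℝ} {f g φ : ℝ → ℝ} {a b t₁ t₂ x : ℝ}

lemma ConvexOn.exists_bounds_Icc (hφ : ConvexOn ℝ (Icc a b) φ) :
    ∃ L U, ∀ x ∈ Icc a b, L ≤ φ x ∧ φ x ≤ U := by
  have upper {x} (hx : x ∈ Icc a b) : φ x ≤ max (φ a) (φ b) :=
    hφ.le_on_segment ⟨le_rfl, hx.1.trans hx.2⟩ ⟨hx.1.trans hx.2, le_rfl⟩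
      (by rwa [segment_eq_Icc (hx.1.trans hx.2)])
  refine ⟨2 * φ ((a + b) / 2) - max (φ a) (φ b), max (φ a) (φ b), fun x hx => ⟨?_, upper hx⟩⟩
  -- `(a + b) / 2` is the midpoint of `x` and of its mirror image `a + b - x`
  have hx' : a + b - x ∈ Icc a b := ⟨by linarith [hx.2], by linarith [hx.1]⟩
  have hmid := hφ.2 hx hx' one_half_pos.le one_half_pos.le (add_halves 1)
  simp only [smul_eq_mul] at hmid
  rw [show 1 / 2 * x + 1 / 2 * (a + b - x) = (a + b) / 2 by ring] at hmid
  linarith [upper hx']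

lemma ConvexOn.integrableOn_mul (hφ : ConvexOn ℝ (Icc a b) φ) (hg : IntegrableOn g (Ioo a b)) :
    IntegrableOn (fun x => φ x * g x) (Ioo a b) := by
  obtain ⟨L, U, hLU⟩ := hφ.exists_bounds_Icc
  have hcont : ContinuousOn φ (Ioo a b) :=
    (hφ.subset Ioo_subset_Icc_self (convex_Ioo a b)).continuousOn isOpen_Ioo
  refine hg.bdd_mul (hcont.aestronglyMeasurable measurableSet_Ioo) (c := max |L| |U|) ?_
  filter_upwards [ae_restrict_mem measurableSet_Ioo] with x hx
  exact abs_le_max_abs_abs (hLU x (Ioo_subset_Icc_self hx)).1 (hLU x (Ioo_subset_Icc_self hx)).2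

lemma ConvexOn.concaveOn_chord_sub (hφ : ConvexOn ℝ s φ) (t₁ t₂ : ℝ) :
    ConcaveOn ℝ s (fun x => φ t₁ + slope φ t₁ t₂ * (x - t₁) - φ x) := by
  have hchord : ConcaveOn ℝ s (fun x => φ t₁ + slope φ t₁ t₂ * (x - t₁)) :=
    ⟨hφ.1, fun x _ y _ a b _ _ hab => le_of_eq (by
      simp only [smul_eq_mul]; linear_combination (φ t₁ - slope φ t₁ t₂ * t₁) * hab)⟩
  exact hchord.sub hφ

lemma ConcaveOn.nonneg_of_mem_Icc (hf : ConcaveOn ℝ s f) (h₁ : t₁ ∈ s) (h₂ : t₂ ∈ s)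
    (hf₁ : f t₁ = 0) (hf₂ : f t₂ = 0) (hx : x ∈ Icc t₁ t₂) : 0 ≤ f x := by
  have := hf.ge_on_segment h₁ h₂ (segment_eq_Icc (hx.1.trans hx.2) ▸ hx)
  rwa [hf₁, hf₂, min_self] at this

lemma ConcaveOn.nonpos_of_notMem_Icc (hf : ConcaveOn ℝ s f) (h₁ : t₁ ∈ s) (h₂ : t₂ ∈ s)
    (ht : t₁ < t₂) (hf₁ : f t₁ = 0) (hf₂ : f t₂ = 0) (hx : x ∈ s) (hx' : x ∉ Icc t₁ t₂) :
    f x ≤ 0 := by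
  rcases not_and_or.1 hx' with hlt | hgt
  · exact hf₁ ▸ hf.left_le_of_le_right'' hx h₂ (not_le.1 hlt).le ht (hf₁.trans hf₂.symm).le
  · exact hf₂ ▸ hf.right_le_of_le_left'' h₁ hx ht (not_le.1 hgt).le (hf₂.trans hf₁.symm).le

lemma ConcaveOn.mul_nonneg_of_eq_zero (hf : ConcaveOn ℝ s f) (hg : ConcaveOn ℝ s g)
    (h₁ : t₁ ∈ s) (h₂ : t₂ ∈ s) (ht : t₁ < t₂) (hf₁ : f t₁ = 0) (hf₂ : f t₂ = 0)
    (hg₁ : g t₁ = 0) (hg₂ : g t₂ = 0) (hx : x ∈ s) : 0 ≤ f x * g x := by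
  by_cases hx' : x ∈ Icc t₁ t₂
  · exact mul_nonneg (hf.nonneg_of_mem_Icc h₁ h₂ hf₁ hf₂ hx')
      (hg.nonneg_of_mem_Icc h₁ h₂ hg₁ hg₂ hx')
  · exact mul_nonneg_of_nonpos_of_nonpos (hf.nonpos_of_notMem_Icc h₁ h₂ ht hf₁ hf₂ hx hx')
      (hg.nonpos_of_notMem_Icc h₁ h₂ ht hg₁ hg₂ hx hx')

end Convexity

lemma exists_two_zeros_of_tendsto_atBot {ψ : ℝ → ℝ} {a b m : ℝ} (hψ : ContinuousOn ψ (Ioo a b))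
    (ha : Tendsto ψ (𝓝[>] a) atBot) (hb : Tendsto ψ (𝓝[<] b) atBot) (hm : m ∈ Ioo a b)
    (hψm : 0 < ψ m) :
    ∃ t₁ t₂, t₁ ∈ Ioo a b ∧ t₂ ∈ Ioo a b ∧ t₁ < t₂ ∧ ψ t₁ = 0 ∧ ψ t₂ = 0 := by
  obtain ⟨x, hψx, hx⟩ :=
    ((ha.eventually (eventually_lt_atBot 0)).and (Ioo_mem_nhdsGT hm.1)).exists
  obtain ⟨y, hψy, hy⟩ :=
    ((hb.eventually (eventually_lt_atBot 0)).and (Ioo_mem_nhdsLT hm.2)).exists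
  obtain ⟨t₁, ht₁, hψt₁⟩ := intermediate_value_Ioo hx.2.le
    (hψ.mono (Icc_subset_Ioo hx.1 hm.2)) ⟨hψx, hψm⟩
  obtain ⟨t₂, ht₂, hψt₂⟩ := intermediate_value_Ioo' hy.1.le
    (hψ.mono (Icc_subset_Ioo hm.1 hy.2)) ⟨hψy, hψm⟩
  exact ⟨t₁, t₂, ⟨hx.1.trans ht₁.1, ht₁.2.trans hm.2⟩, ⟨hm.1.trans ht₂.1, ht₂.2.trans hy.2⟩,
    ht₁.2.trans ht₂.1, hψt₁, hψt₂⟩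

lemma mul_sub_nonneg_of_mul_log_sub_log_nonneg {u p q : ℝ} (hp : 0 < p) (hq : 0 < q)
    (h : 0 ≤ u * (log p - log q)) : 0 ≤ u * (p - q) := by
  rcases lt_trichotomy u 0 with hu | rfl | hu
  · exact mul_nonneg_of_nonpos_of_nonpos hu.le <| sub_nonpos.2 <|
      (log_le_log_iff hp hq).1 (sub_nonpos.1 (nonpos_of_mul_nonneg_right h hu))
  · simp
  · exact mul_nonneg hu.le <| sub_nonneg.2 <|
      (log_le_log_iff hq hp).1 (sub_nonneg.1 (nonneg_of_mul_nonneg_right h hu))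

lemma ConvexOn.exists_affine_mul_sub_nonpos {φ p q ψ : ℝ → ℝ} {a b : ℝ}
    (hφ : ConvexOn ℝ (Icc a b) φ) (hp : ∀ x ∈ Ioo a b, 0 < p x) (hq : ∀ x ∈ Ioo a b, 0 < q x)
    (hψ : ∀ x ∈ Ioo a b, log (p x) - log (q x) = ψ x) (hψc : ConcaveOn ℝ (Ioo a b) ψ)
    (ha : Tendsto ψ (𝓝[>] a) atBot) (hb : Tendsto ψ (𝓝[<] b) atBot) :
    ∃ c d, ∀ x ∈ Ioo a b, (φ x - (c + d * x)) * (p x - q x) ≤ 0 := by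
  by_cases hpos : ∃ m ∈ Ioo a b, 0 < ψ m
  · obtain ⟨m, hm, hψm⟩ := hpos
    obtain ⟨t₁, t₂, h₁, h₂, ht, hψ₁, hψ₂⟩ :=
      exists_two_zeros_of_tendsto_atBot (hψc.continuousOn isOpen_Ioo) ha hb hm hψm
    refine ⟨φ t₁ - slope φ t₁ t₂ * t₁, slope φ t₁ t₂, fun x hx => ?_⟩
    have hchord := (hφ.subset Ioo_subset_Icc_self (convex_Ioo a b)).concaveOn_chord_sub t₁ t₂
    have hsign := hchord.mul_nonneg_of_eq_zero hψc h₁ h₂ ht (by simp)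
      (by rw [mul_comm, ← smul_eq_mul, sub_smul_slope, vsub_eq_sub]; ring) hψ₁ hψ₂ hx
    rw [← hψ x hx] at hsign
    linarith [mul_sub_nonneg_of_mul_log_sub_log_nonneg (hp x hx) (hq x hx) hsign]
  · push Not at hpos
    obtain ⟨L, U, hLU⟩ := hφ.exists_bounds_Icc
    refine ⟨L, 0, fun x hx => mul_nonpos_of_nonneg_of_nonpos ?_ ?_⟩
    · linarith [(hLU x (Ioo_subset_Icc_self hx)).1]
    · exact sub_nonpos.2 <| (log_le_log_iff (hp x hx) (hq x hx)).1 <|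
        sub_nonpos.1 (hψ x hx ▸ hpos x hx)

lemma integral_mul_nonpos_of_affine_cut {μ : Measure ℝ} {φ h : ℝ → ℝ} (c d : ℝ)
    (hh : Integrable h μ) (hxh : Integrable (fun x => x * h x) μ)
    (hφh : Integrable (fun x => φ x * h x) μ)
    (h₀ : ∫ x, h x ∂μ = 0) (h₁ : ∫ x, x * h x ∂μ = 0)
    (hcut : ∀ᵐ x ∂μ, (φ x - (c + d * x)) * h x ≤ 0) :
    ∫ x, φ x * h x ∂μ ≤ 0 := by
  have hline : Integrable (fun x => c * h x + d * (x * h x)) μ :=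
    (hh.const_mul c).add (hxh.const_mul d)
  have hcut_eq : ∫ x, (φ x - (c + d * x)) * h x ∂μ = ∫ x, φ x * h x ∂μ := by
    simp_rw [sub_mul, add_mul, mul_assoc]
    rw [integral_sub hφh hline,
      integral_add (hh.const_mul c) (hxh.const_mul d), integral_const_mul, integral_const_mul,
      h₀, h₁]
    ring
  exact hcut_eq ▸ integral_nonpos_of_ae hcut

section LogCombination

variable {c p q : ℝ}

lemma concaveOn_add_mul_log_add_mul_log_one_sub (hp : 0 ≤ p) (hq : 0 ≤ q) :
    ConcaveOn ℝ (Ioo 0 1) (fun x => c + p * log x + q * log (1 - x)) := by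
  have hlog : ConcaveOn ℝ (Ioo 0 1) log :=
    strictConcaveOn_log_Ioi.concaveOn.subset Ioo_subset_Ioi_self (convex_Ioo 0 1)
  have hlog_one_sub : ConcaveOn ℝ (Ioo 0 1) (fun x => log (1 - x)) :=
    (strictConcaveOn_log_Ioi.concaveOn.comp_affineMap
      (AffineMap.const ℝ ℝ (1 : ℝ) - AffineMap.id ℝ ℝ)).subset
      (fun x hx => sub_pos.2 hx.2) (convex_Ioo 0 1)
  exact ((concaveOn_const c (convex_Ioo 0 1)).add (hlog.smul hp)).add (hlog_one_sub.smul hq)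

lemma tendsto_add_mul_log_add_mul_log_one_sub_nhdsGT_zero (hp : 0 < p) :
    Tendsto (fun x => c + p * log x + q * log (1 - x)) (𝓝[>] 0) atBot := by
  have hq : Tendsto (fun x => q * log (1 - x)) (𝓝[>] 0) (𝓝 (q * log (1 - 0))) :=
    ((continuousAt_const.sub continuousAt_id).log (by norm_num)).const_mul q
      |>.tendsto.mono_left nhdsWithin_le_nhds
  exact (tendsto_const_nhds.add_atBot (tendsto_log_nhdsGT_zero.const_mul_atBot hp)).atBot_add hq

lemma tendsto_add_mul_log_add_mul_log_one_sub_nhdsLT_one (hq : 0 < q) :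
    Tendsto (fun x => c + p * log x + q * log (1 - x)) (𝓝[<] 1) atBot := by
  have h : Tendsto (fun x : ℝ => 1 - x) (𝓝[<] 1) (𝓝[>] 0) :=
    tendsto_nhdsWithin_iff.2
      ⟨((continuous_sub_left 1).tendsto' 1 0 (sub_self 1)).mono_left nhdsWithin_le_nhds,
        eventually_nhdsWithin_of_forall fun _ hx => mem_Ioi.2 (sub_pos.2 hx)⟩
  have hp : Tendsto (fun x => c + p * log x) (𝓝[<] 1) (𝓝 (c + p * log 1)) :=
    ((continuousAt_log one_ne_zero).const_mul p).const_add c |>.tendsto.mono_left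
      nhdsWithin_le_nhds
  exact hp.add_atBot ((tendsto_log_nhdsGT_zero.comp h).const_mul_atBot hq)

end LogCombination

noncomputable def betaKernel (α β x : ℝ) : ℝ := x ^ (α - 1) * (1 - x) ^ (β - 1)

section Beta

variable {α β x : ℝ}

lemma betaKernel_add_one_left (hx : 0 < x) : betaKernel (α + 1) β x = x * betaKernel α β x := by
  rw [betaKernel, betaKernel, add_sub_cancel_right, ← mul_assoc, mul_comm x,
    ← rpow_add_one hx.ne', sub_add_cancel]

lemma betaKernel_pos (hx : x ∈ Ioo 0 1) : 0 < betaKernel α β x :=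
  mul_pos (rpow_pos_of_pos hx.1 _) (rpow_pos_of_pos (sub_pos.2 hx.2) _)

lemma log_betaKernel (hx : x ∈ Ioo 0 1) :
    log (betaKernel α β x) = (α - 1) * log x + (β - 1) * log (1 - x) := by
  rw [betaKernel, log_mul (rpow_pos_of_pos hx.1 _).ne' (rpow_pos_of_pos (sub_pos.2 hx.2) _).ne',
    log_rpow hx.1, log_rpow (sub_pos.2 hx.2)]

lemma ofReal_betaKernel (hx : x ∈ Ioo 0 1) :
    (betaKernel α β x : ℂ) = (x : ℂ) ^ ((α : ℂ) - 1) * (1 - (x : ℂ)) ^ ((β : ℂ) - 1) := by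
  rw [betaKernel, Complex.ofReal_mul, Complex.ofReal_cpow hx.1.le,
    Complex.ofReal_cpow (sub_pos.2 hx.2).le]
  push_cast
  rfl

lemma integrableOn_betaKernel (hα : 0 < α) (hβ : 0 < β) :
    IntegrableOn (betaKernel α β) (Ioo 0 1) := by
  have h := Complex.betaIntegral_convergent (u := α) (v := β) (by simpa) (by simpa)
  rw [intervalIntegrable_iff_integrableOn_Ioo_of_le zero_le_one] at h
  refine IntegrableOn.congr_fun h.re (fun x hx => ?_) measurableSet_Ioo
  simp [← ofReal_betaKernel hx]

lemma integrableOn_id_mul_betaKernel (hα : 0 < α) (hβ : 0 < β) :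
    IntegrableOn (fun x => x * betaKernel α β x) (Ioo 0 1) :=
  (integrableOn_betaKernel (by linarith) hβ).congr_fun
    (fun _ hx => betaKernel_add_one_left hx.1) measurableSet_Ioo

lemma integral_betaKernel (hα : 0 < α) (hβ : 0 < β) :
    ∫ x in Ioo 0 1, betaKernel α β x = beta α β := by
  rw [beta_eq_betaIntegralReal α β hα hβ, Complex.betaIntegral,
    intervalIntegral.integral_of_le zero_le_one, integral_Ioc_eq_integral_Ioo,
    ← setIntegral_congr_fun measurableSet_Ioo fun x hx => ofReal_betaKernel hx,
    integral_complex_ofReal, Complex.ofReal_re]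

lemma beta_add_one_left (hα : 0 < α) (hβ : 0 < β) :
    beta (α + 1) β = α / (α + β) * beta α β := by
  rw [beta, beta, add_right_comm, Gamma_add_one hα.ne',
    Gamma_add_one (by positivity)]
  have := (Gamma_pos_of_pos (add_pos hα hβ)).ne'
  field_simp

-- Mathlib's `ProbabilityTheory.betaPDFReal`, without the indicator of `(0, 1)`.
noncomputable def betaDensity (α β x : ℝ) : ℝ := betaKernel α β x / beta α β

lemma betaDensity_pos (hα : 0 < α) (hβ : 0 < β) (hx : x ∈ Ioo 0 1) : 0 < betaDensity α β x :=
  div_pos (betaKernel_pos hx) (beta_pos hα hβ)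

lemma log_betaDensity (hα : 0 < α) (hβ : 0 < β) (hx : x ∈ Ioo 0 1) :
    log (betaDensity α β x) = (α - 1) * log x + (β - 1) * log (1 - x) - log (beta α β) := by
  rw [betaDensity, log_div (betaKernel_pos hx).ne' (beta_pos hα hβ).ne', log_betaKernel hx]

lemma integrableOn_betaDensity (hα : 0 < α) (hβ : 0 < β) :
    IntegrableOn (betaDensity α β) (Ioo 0 1) :=
  (integrableOn_betaKernel hα hβ).div_const _

lemma integrableOn_id_mul_betaDensity (hα : 0 < α) (hβ : 0 < β) :
    IntegrableOn (fun x => x * betaDensity α β x) (Ioo 0 1) :=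
  IntegrableOn.congr_fun ((integrableOn_id_mul_betaKernel hα hβ).div_const _)
    (fun _ _ => mul_div_assoc _ _ _) measurableSet_Ioo

lemma integral_betaDensity (hα : 0 < α) (hβ : 0 < β) :
    ∫ x in Ioo 0 1, betaDensity α β x = 1 := by
  simp only [betaDensity]
  rw [integral_div, integral_betaKernel hα hβ, div_self (beta_pos hα hβ).ne']

lemma integral_id_mul_betaDensity (hα : 0 < α) (hβ : 0 < β) :
    ∫ x in Ioo 0 1, x * betaDensity α β x = α / (α + β) := by
  have hshift : ∫ x in Ioo 0 1, x * betaKernel α β x = ∫ x in Ioo 0 1, betaKernel (α + 1) β x :=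
    setIntegral_congr_fun measurableSet_Ioo fun x hx => (betaKernel_add_one_left hx.1).symm
  simp only [betaDensity, ← mul_div_assoc]
  rw [integral_div, hshift, integral_betaKernel (by linarith) hβ, beta_add_one_left hα hβ,
    mul_div_cancel_right₀ _ (beta_pos hα hβ).ne']

end Beta

theorem ConvexOn.integral_mul_betaDensity_le {φ : ℝ → ℝ} {a b a' b' : ℝ}
    (hφ : ConvexOn ℝ (Icc 0 1) φ) (ha : 0 < a) (hb : 0 < b) (ha' : 0 < a') (hb' : 0 < b')
    (haa' : a < a') (hbb' : b < b') (hmean : a / (a + b) = a' / (a' + b')) :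
    ∫ x in Ioo 0 1, φ x * betaDensity a' b' x ≤ ∫ x in Ioo 0 1, φ x * betaDensity a b x := by
  set h : ℝ → ℝ := fun x => betaDensity a' b' x - betaDensity a b x
  have hh : IntegrableOn h (Ioo 0 1) :=
    (integrableOn_betaDensity ha' hb').sub (integrableOn_betaDensity ha hb)
  have hxh : IntegrableOn (fun x => x * h x) (Ioo 0 1) :=
    IntegrableOn.congr_fun
      ((integrableOn_id_mul_betaDensity ha' hb').sub (integrableOn_id_mul_betaDensity ha hb))
      (fun x _ => (mul_sub x _ _).symm) measurableSet_Ioo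
  have h₀ : ∫ x in Ioo 0 1, h x = 0 := by
    rw [integral_sub (integrableOn_betaDensity ha' hb') (integrableOn_betaDensity ha hb),
      integral_betaDensity ha hb, integral_betaDensity ha' hb', sub_self]
  have h₁ : ∫ x in Ioo 0 1, x * h x = 0 := by
    simp only [h, mul_sub]
    rw [integral_sub (integrableOn_id_mul_betaDensity ha' hb')
      (integrableOn_id_mul_betaDensity ha hb), integral_id_mul_betaDensity ha hb,
      integral_id_mul_betaDensity ha' hb', hmean, sub_self]
  obtain ⟨c, d, hcut⟩ := hφ.exists_affine_mul_sub_nonpos (p := betaDensity a' b')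
    (ψ := fun x => log (beta a b / beta a' b') + (a' - a) * log x + (b' - b) * log (1 - x))
    (fun _ => betaDensity_pos ha' hb') (fun _ => betaDensity_pos ha hb)
    (fun x hx => by
      rw [log_betaDensity ha' hb' hx, log_betaDensity ha hb hx,
        log_div (beta_pos ha hb).ne' (beta_pos ha' hb').ne']
      ring)
    (concaveOn_add_mul_log_add_mul_log_one_sub (by linarith) (by linarith))
    (tendsto_add_mul_log_add_mul_log_one_sub_nhdsGT_zero (by linarith))
    (tendsto_add_mul_log_add_mul_log_one_sub_nhdsLT_one (by linarith))
  have hφh := integral_mul_nonpos_of_affine_cut c d hh hxh (hφ.integrableOn_mul hh) h₀ h₁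
    (ae_restrict_of_forall_mem measurableSet_Ioo hcut)
  simp only [h, mul_sub] at hφh
  rwa [integral_sub (hφ.integrableOn_mul (integrableOn_betaDensity ha' hb'))
    (hφ.integrableOn_mul (integrableOn_betaDensity ha hb)), sub_nonpos] at hφh

/-- Convex order between Beta laws: if `a < a'`, `b < b'` and the means
`a/(a+b) = a'/(a'+b')` agree, then for every convex function `φ` on `[0,1]`,
`E[φ(X')] ≤ E[φ(X)]` where `X ∼ Beta(a,b)` and `X' ∼ Beta(a',b')`. -/
theorem stmt8 (a b a' b' : ℝ)
    (ha : 0 < a) (hb : 0 < b) (ha' : 0 < a') (hb' : 0 < b')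
    (haa' : a < a') (hbb' : b < b')
    (hmean : a / (a + b) = a' / (a' + b'))
    (φ : ℝ → ℝ) (hφ : ConvexOn ℝ (Set.Icc 0 1) φ) :
    (∫ x in (0:ℝ)..1, φ x * (x ^ (a' - 1) * (1 - x) ^ (b' - 1)))
        / (∫ x in (0:ℝ)..1, x ^ (a' - 1) * (1 - x) ^ (b' - 1))
      ≤ (∫ x in (0:ℝ)..1, φ x * (x ^ (a - 1) * (1 - x) ^ (b - 1)))
        / (∫ x in (0:ℝ)..1, x ^ (a - 1) * (1 - x) ^ (b - 1)) := by
  have key := hφ.integral_mul_betaDensity_le ha hb ha' hb' haa' hbb' hmean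
  simp only [betaDensity, ← mul_div_assoc, integral_div] at key
  rw [← integral_betaKernel ha hb, ← integral_betaKernel ha' hb'] at key
  simp only [intervalIntegral.integral_of_le zero_le_one, integral_Ioc_eq_integral_Ioo]
  exact key
end

section
/- Let δ¹, δ² > 0, R₀¹, R₀² > 0, s ∈ (0,1), and let f_w¹, f_w² be Monod functions. For λ > 0 set λ¹ = sλ, λ² = (1−s)λ, let K = [[−s, s], [1−s, s−1]], Δ = diag(δ¹, δ²), and let Σ(λ) = (Σ¹(λ), Σ²(λ)) be the unique solution of (Δ − λK)Σ = (δ¹R₀¹, δ²R₀²). Let Γ_w⁰(λ) be the largest eigenvalue of A_w(λ) = [[f_w¹(Σ¹(λ)) − δ¹ − sλ, sλ], [(1−s)λ, f_w²(Σ²(λ)) − δ² − (1−s)λ]]. Then lim_{λ→+∞} Γ_w⁰(λ) = (1−s)(f_w¹(R^∞) − δ¹) + s(f_w²(R^∞) − δ²), where R^∞ = ((1−s)δ¹R₀¹ + sδ²R₀²)/((1−s)δ¹ + sδ²), and lim_{λ→0⁺} Γ_w⁰(λ) = max(f_w¹(R₀¹) − δ¹, f_w²(R₀²) − δ²). -/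
open Filter Topology

/-- The matrix `A_w(λ)` of the one-species gradostat, with `λ¹ = sλ`,
`λ² = (1−s)λ`. -/
noncomputable def Amat (a1 b1 a2 b2 δ1 δ2 s lam S1 S2 : ℝ) :
    Matrix (Fin 2) (Fin 2) ℝ :=
  !![monod a1 b1 S1 - δ1 - s * lam, s * lam;
     (1 - s) * lam, monod a2 b2 S2 - δ2 - (1 - s) * lam]

lemma greatest_root (p q E μ0 : ℝ) (hE : 0 ≤ E)
    (h : IsGreatest {μ : ℝ | (p - μ)*(q - μ) - E = 0} μ0) :
    μ0 = (p+q)/2 + Real.sqrt (((p-q)/2)^2 + E) := by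
  have hd : (0:ℝ) ≤ ((p-q)/2)^2 + E := by positivity
  refine h.unique ⟨?_, ?_⟩
  · show (p - _)*(q - _) - E = 0
    have := Real.sq_sqrt hd
    nlinarith [this]
  · intro μ hμ
    have hμ' : (μ - (p+q)/2)^2 = ((p-q)/2)^2 + E := by
      have : (p - μ)*(q - μ) - E = 0 := hμ
      nlinarith [this]
    have h1 : μ - (p+q)/2 ≤ Real.sqrt (((p-q)/2)^2 + E) := by
      calc μ - (p+q)/2 ≤ |μ - (p+q)/2| := le_abs_self _
        _ = Real.sqrt ((μ - (p+q)/2)^2) := (Real.sqrt_sq_eq_abs _).symm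
        _ = _ := by rw [hμ']
    linarith

lemma ratio_atTop (A B C D : ℝ) (hD : D ≠ 0) :
    Tendsto (fun lam : ℝ => (A + B*lam)/(C + D*lam)) atTop (𝓝 (B/D)) := by
  have h0 : ∀ᶠ lam : ℝ in atTop,
      (A/lam + B)/(C/lam + D) = (A + B*lam)/(C + D*lam) := by
    filter_upwards [eventually_gt_atTop 0] with lam hlam
    have h1 : A/lam + B = (A + B*lam)/lam := by field_simp
    have h2 : C/lam + D = (C + D*lam)/lam := by field_simp
    rw [h1, h2, div_div_div_cancel_right₀ hlam.ne']
  have hnum : Tendsto (fun lam : ℝ => A/lam + B) atTop (𝓝 (0 + B)) :=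
    (tendsto_const_nhds.div_atTop tendsto_id).add tendsto_const_nhds
  have hden : Tendsto (fun lam : ℝ => C/lam + D) atTop (𝓝 (0 + D)) :=
    (tendsto_const_nhds.div_atTop tendsto_id).add tendsto_const_nhds
  have := (hnum.div hden (by simpa using hD))
  simp only [zero_add] at this
  exact this.congr' h0

lemma monod_tendsto {a b r0 : ℝ} (h : b + r0 ≠ 0) {l : Filter ℝ} {f : ℝ → ℝ}
    (hf : Tendsto f l (𝓝 r0)) :
    Tendsto (fun x => monod a b (f x)) l (𝓝 (monod a b r0)) := by
  have hc : ContinuousAt (fun r : ℝ => a * r / (b + r)) r0 :=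
    ((continuousAt_const.mul continuousAt_id).div
      (continuousAt_const.add continuousAt_id) h)
  exact hc.tendsto.comp hf

lemma half_max (x y : ℝ) : (x+y)/2 + |x-y|/2 = max x y := by
  rcases le_total x y with h | h
  · rw [abs_of_nonpos (by linarith), max_eq_right h]; ring
  · rw [abs_of_nonneg (by linarith), max_eq_left h]; ring

/-- Limit of `Γ` as `λ → 0⁺`. -/
lemma gamma_zero (s : ℝ) (hs0 : 0 < s) (hs1 : s < 1)
    (P Q Γ : ℝ → ℝ) (x y : ℝ)
    (hP : Tendsto P (𝓝[>](0:ℝ)) (𝓝 x)) (hQ : Tendsto Q (𝓝[>](0:ℝ)) (𝓝 y))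
    (hΓ : ∀ᶠ lam in 𝓝[>](0:ℝ), Γ lam
      = ((P lam - s*lam) + (Q lam - (1-s)*lam))/2
        + Real.sqrt ((((P lam - s*lam) - (Q lam - (1-s)*lam))/2)^2
            + s*(1-s)*lam^2)) :
    Tendsto Γ (𝓝[>](0:ℝ)) (𝓝 (max x y)) := by
  have hlam0 : Tendsto (fun lam : ℝ => lam) (𝓝[>](0:ℝ)) (𝓝 0) :=
    tendsto_id.mono_left nhdsWithin_le_nhds
  have hp : Tendsto (fun lam => P lam - s*lam) (𝓝[>](0:ℝ)) (𝓝 (x - s*0)) :=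
    hP.sub (hlam0.const_mul s)
  have hq : Tendsto (fun lam => Q lam - (1-s)*lam) (𝓝[>](0:ℝ)) (𝓝 (y - (1-s)*0)) :=
    hQ.sub (hlam0.const_mul (1-s))
  have T : Tendsto (fun lam => ((P lam - s*lam) + (Q lam - (1-s)*lam))/2
        + Real.sqrt ((((P lam - s*lam) - (Q lam - (1-s)*lam))/2)^2
            + s*(1-s)*lam^2)) (𝓝[>](0:ℝ))
      (𝓝 (((x - s*0) + (y - (1-s)*0))/2
        + Real.sqrt ((((x - s*0) - (y - (1-s)*0))/2)^2 + s*(1-s)*0^2))) := by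
    refine Tendsto.add ((hp.add hq).div_const 2) ?_
    exact (((hp.sub hq).div_const 2).pow 2).add
      ((hlam0.pow 2).const_mul (s*(1-s))) |>.sqrt
  have hpt : ((x - s*0) + (y - (1-s)*0))/2
        + Real.sqrt ((((x - s*0) - (y - (1-s)*0))/2)^2 + s*(1-s)*0^2)
      = max x y := by
    rw [← half_max x y]
    norm_num [Real.sqrt_sq_eq_abs]
    rw [abs_div]
    norm_num
  rw [hpt] at T
  exact T.congr' (hΓ.mono fun _ h => h.symm)

/-- Limit of `Γ` as `λ → +∞`. -/
lemma gamma_top (s : ℝ) (hs0 : 0 < s) (hs1 : s < 1)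
    (P Q Γ : ℝ → ℝ) (x y : ℝ)
    (hP : Tendsto P atTop (𝓝 x)) (hQ : Tendsto Q atTop (𝓝 y))
    (hΓ : ∀ᶠ lam in atTop, Γ lam
      = ((P lam - s*lam) + (Q lam - (1-s)*lam))/2
        + Real.sqrt ((((P lam - s*lam) - (Q lam - (1-s)*lam))/2)^2
            + s*(1-s)*lam^2)) :
    Tendsto Γ atTop (𝓝 ((1-s)*x + s*y)) := by
  have h1s : (0:ℝ) < 1 - s := by linarith
  set v : ℝ → ℝ := fun lam => P lam - Q lam with hv_def
  set c : ℝ → ℝ := fun lam => (2*s-1) * (v lam) with hc_def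
  have hv : Tendsto v atTop (𝓝 (x - y)) := hP.sub hQ
  have hc : Tendsto c atTop (𝓝 ((2*s-1) * (x-y))) := hv.const_mul _
  -- λ - c λ → ∞
  have hclam : Tendsto (fun lam => lam - c lam) atTop atTop := by
    refine tendsto_atTop_mono' _ ?_
      (tendsto_atTop_add_const_right _ (-((2*s-1)*(x-y)+1)) tendsto_id)
    filter_upwards [hc.eventually (eventually_le_nhds (lt_add_one ((2*s-1)*(x-y))))]
      with lam hlam
    simp only [id]
    linarith
  set dd : ℝ → ℝ := fun lam =>
    (((P lam - s*lam) - (Q lam - (1-s)*lam))/2)^2 + s*(1-s)*lam^2 with hdd_def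
  have hddnn : ∀ lam, 0 ≤ dd lam := by
    intro lam
    have : dd lam = ((lam - c lam)/2)^2 + s*(1-s)*(v lam)^2 := by
      simp only [hdd_def, hc_def, hv_def]; ring
    rw [this]; positivity
  -- denominator tends to infinity
  have hden : Tendsto (fun lam => Real.sqrt (dd lam) + (lam - c lam)/2)
      atTop atTop := by
    refine tendsto_atTop_mono' _ ?_
      (Tendsto.atTop_div_const (by norm_num : (0:ℝ) < 2) hclam)
    filter_upwards with lam
    have := Real.sqrt_nonneg (dd lam)
    linarith
  -- key identity
  have hkey : ∀ᶠ lam in atTop, Γ lam = (P lam + Q lam)/2 - c lam/2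
      + (s*(1-s)*(v lam)^2)/(Real.sqrt (dd lam) + (lam - c lam)/2) := by
    filter_upwards [hΓ, hclam.eventually (eventually_gt_atTop 0)] with lam hg hcl
    rw [hg]
    set t := Real.sqrt (dd lam) with ht_def
    have hdd2 : dd lam = ((lam - c lam)/2)^2 + s*(1-s)*(v lam)^2 := by
      simp only [hdd_def, hc_def, hv_def]; ring
    have ht2 : t^2 = dd lam := Real.sq_sqrt (hddnn lam)
    have htnn : 0 ≤ t := Real.sqrt_nonneg _
    have hpos : 0 < t + (lam - c lam)/2 := by linarith
    have hfrac : t - (lam - c lam)/2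
        = (s*(1-s)*(v lam)^2)/(t + (lam - c lam)/2) := by
      rw [eq_div_iff hpos.ne']
      linear_combination ht2 + hdd2
    have hpq : ((P lam - s*lam) + (Q lam - (1-s)*lam))/2
        = (P lam + Q lam - lam)/2 := by ring
    rw [hpq]
    have hcv : c lam = (2*s-1) * v lam := rfl
    have hvv : v lam = P lam - Q lam := rfl
    linarith [hfrac]
  -- conclude
  have T : Tendsto (fun lam => (P lam + Q lam)/2 - c lam/2
      + (s*(1-s)*(v lam)^2)/(Real.sqrt (dd lam) + (lam - c lam)/2)) atTop
      (𝓝 ((x+y)/2 - ((2*s-1)*(x-y))/2 + 0)) := by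
    refine Tendsto.add ?_ ?_
    · exact ((hP.add hQ).div_const 2).sub (hc.div_const 2)
    · exact Tendsto.div_atTop (((hv.pow 2).const_mul (s*(1-s)))) hden
  have hpt : (x+y)/2 - ((2*s-1)*(x-y))/2 + 0 = (1-s)*x + s*y := by ring
  rw [hpt] at T
  exact T.congr' (hkey.mono fun _ h => h.symm)

/-- Limits of the deterministic invasion rate `Γ_w⁰(λ)` as `λ → +∞`
and `λ → 0⁺`. -/
theorem stmt12 (a1 b1 a2 b2 δ1 δ2 R01 R02 s : ℝ)
    (ha1 : 0 < a1) (hb1 : 0 < b1) (ha2 : 0 < a2) (hb2 : 0 < b2)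
    (hδ1 : 0 < δ1) (hδ2 : 0 < δ2) (hR01 : 0 < R01) (hR02 : 0 < R02)
    (hs0 : 0 < s) (hs1 : s < 1)
    (S1 S2 Γ : ℝ → ℝ)
    -- `Σ(λ)` is the unique solution of `(Δ − λK)Σ = (δ¹R₀¹, δ²R₀²)`
    (hS1 : ∀ lam > 0, (δ1 + lam * s) * S1 lam - lam * s * S2 lam = δ1 * R01)
    (hS2 : ∀ lam > 0,
      -(lam * (1 - s)) * S1 lam + (δ2 + lam * (1 - s)) * S2 lam = δ2 * R02)
    -- `Γ(λ)` is the largest eigenvalue of `A_w(λ)`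
    (hΓ : ∀ lam > 0, IsGreatest {μ : ℝ |
      (Amat a1 b1 a2 b2 δ1 δ2 s lam (S1 lam) (S2 lam)
        - μ • (1 : Matrix (Fin 2) (Fin 2) ℝ)).det = 0} (Γ lam)) :
    Tendsto Γ atTop (nhds
      ((1 - s) * (monod a1 b1
          (((1 - s) * δ1 * R01 + s * δ2 * R02) / ((1 - s) * δ1 + s * δ2)) - δ1)
        + s * (monod a2 b2
          (((1 - s) * δ1 * R01 + s * δ2 * R02) / ((1 - s) * δ1 + s * δ2)) - δ2))) ∧
    Tendsto Γ (nhdsWithin 0 (Set.Ioi 0)) (nhds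
      (max (monod a1 b1 R01 - δ1) (monod a2 b2 R02 - δ2))) := by
  have h1s : (0:ℝ) < 1 - s := by linarith
  have hD0 : (0:ℝ) < δ1*(1-s)+δ2*s := by positivity
  have hDpos : ∀ lam : ℝ, 0 < lam → 0 < δ1*δ2 + (δ1*(1-s)+δ2*s)*lam := by
    intro lam hlam; positivity
  -- explicit formulas for S1, S2
  have hSe1 : ∀ lam > 0, S1 lam
      = (δ1*R01*δ2 + (δ1*R01*(1-s) + s*(δ2*R02))*lam)
        /(δ1*δ2 + (δ1*(1-s)+δ2*s)*lam) := by
    intro lam hlam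
    rw [eq_div_iff (hDpos lam hlam).ne']
    linear_combination (δ2+lam*(1-s)) * hS1 lam hlam + lam*s * hS2 lam hlam
  have hSe2 : ∀ lam > 0, S2 lam
      = (δ2*R02*δ1 + (δ2*R02*s + (1-s)*(δ1*R01))*lam)
        /(δ1*δ2 + (δ1*(1-s)+δ2*s)*lam) := by
    intro lam hlam
    rw [eq_div_iff (hDpos lam hlam).ne']
    linear_combination lam*(1-s) * hS1 lam hlam + (δ1+lam*s) * hS2 lam hlam
  set Rinf : ℝ := ((1 - s) * δ1 * R01 + s * δ2 * R02) / ((1 - s) * δ1 + s * δ2)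
    with hRinf_def
  have hRinfpos : 0 < Rinf := by
    rw [hRinf_def]; positivity
  -- limits of S1, S2 at +∞
  have hS1top : Tendsto S1 atTop (𝓝 Rinf) := by
    have := ratio_atTop (δ1*R01*δ2) (δ1*R01*(1-s) + s*(δ2*R02)) (δ1*δ2)
      (δ1*(1-s)+δ2*s) hD0.ne'
    have hpt : (δ1*R01*(1-s) + s*(δ2*R02))/(δ1*(1-s)+δ2*s) = Rinf := by
      rw [hRinf_def]; ring_nf
    rw [hpt] at this
    refine this.congr' ?_
    filter_upwards [eventually_gt_atTop 0] with lam hlam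
    exact (hSe1 lam hlam).symm
  have hS2top : Tendsto S2 atTop (𝓝 Rinf) := by
    have := ratio_atTop (δ2*R02*δ1) (δ2*R02*s + (1-s)*(δ1*R01)) (δ1*δ2)
      (δ1*(1-s)+δ2*s) hD0.ne'
    have hpt : (δ2*R02*s + (1-s)*(δ1*R01))/(δ1*(1-s)+δ2*s) = Rinf := by
      rw [hRinf_def]; ring_nf
    rw [hpt] at this
    refine this.congr' ?_
    filter_upwards [eventually_gt_atTop 0] with lam hlam
    exact (hSe2 lam hlam).symm
  -- limits of S1, S2 at 0⁺
  have hmem : ∀ᶠ lam in 𝓝[>](0:ℝ), lam ∈ Set.Ioi (0:ℝ) := self_mem_nhdsWithin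
  have hS1zero : Tendsto S1 (𝓝[>](0:ℝ)) (𝓝 R01) := by
    have hcont : ContinuousAt (fun lam : ℝ =>
        (δ1*R01*δ2 + (δ1*R01*(1-s) + s*(δ2*R02))*lam)
          /(δ1*δ2 + (δ1*(1-s)+δ2*s)*lam)) 0 := by
      apply ContinuousAt.div
      · fun_prop
      · fun_prop
      · simp only [mul_zero, add_zero]; positivity
    have hT := (hcont.tendsto).mono_left
      (nhdsWithin_le_nhds : 𝓝[>](0:ℝ) ≤ 𝓝 0)
    have hpt : (δ1*R01*δ2 + (δ1*R01*(1-s) + s*(δ2*R02))*0)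
        /(δ1*δ2 + (δ1*(1-s)+δ2*s)*0) = R01 := by
      rw [mul_zero, add_zero, mul_zero, add_zero, div_eq_iff (by positivity : (δ1*δ2:ℝ) ≠ 0)]
      ring
    rw [hpt] at hT
    refine hT.congr' ?_
    filter_upwards [hmem] with lam hlam
    exact (hSe1 lam hlam).symm
  have hS2zero : Tendsto S2 (𝓝[>](0:ℝ)) (𝓝 R02) := by
    have hcont : ContinuousAt (fun lam : ℝ =>
        (δ2*R02*δ1 + (δ2*R02*s + (1-s)*(δ1*R01))*lam)
          /(δ1*δ2 + (δ1*(1-s)+δ2*s)*lam)) 0 := by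
      apply ContinuousAt.div
      · fun_prop
      · fun_prop
      · simp only [mul_zero, add_zero]; positivity
    have hT := (hcont.tendsto).mono_left
      (nhdsWithin_le_nhds : 𝓝[>](0:ℝ) ≤ 𝓝 0)
    have hpt : (δ2*R02*δ1 + (δ2*R02*s + (1-s)*(δ1*R01))*0)
        /(δ1*δ2 + (δ1*(1-s)+δ2*s)*0) = R02 := by
      rw [mul_zero, add_zero, mul_zero, add_zero, div_eq_iff (by positivity : (δ1*δ2:ℝ) ≠ 0)]
      ring
    rw [hpt] at hT
    refine hT.congr' ?_
    filter_upwards [hmem] with lam hlam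
    exact (hSe2 lam hlam).symm
  -- the explicit formula for Γ
  have hΓeq : ∀ lam > 0, Γ lam
      = (((monod a1 b1 (S1 lam) - δ1) - s*lam)
          + ((monod a2 b2 (S2 lam) - δ2) - (1-s)*lam))/2
        + Real.sqrt (((((monod a1 b1 (S1 lam) - δ1) - s*lam)
            - ((monod a2 b2 (S2 lam) - δ2) - (1-s)*lam))/2)^2
            + s*(1-s)*lam^2) := by
    intro lam hlam
    have hset : {μ : ℝ |
        (Amat a1 b1 a2 b2 δ1 δ2 s lam (S1 lam) (S2 lam)
          - μ • (1 : Matrix (Fin 2) (Fin 2) ℝ)).det = 0}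
        = {μ : ℝ | (((monod a1 b1 (S1 lam) - δ1) - s*lam) - μ)
            * (((monod a2 b2 (S2 lam) - δ2) - (1-s)*lam) - μ)
            - s*(1-s)*lam^2 = 0} := by
      ext μ
      simp only [Set.mem_setOf_eq, Amat, Matrix.det_fin_two, Matrix.sub_apply,
        Matrix.smul_apply, Matrix.one_apply, Matrix.of_apply, Matrix.cons_val',
        Matrix.cons_val_zero, Matrix.cons_val_one, Matrix.head_cons,
        Matrix.head_fin_const, Matrix.empty_val', Matrix.cons_val_fin_one]
      norm_num
      constructor <;> intro h <;> linear_combination h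
    have hg := hΓ lam hlam
    rw [hset] at hg
    exact greatest_root _ _ _ _ (by positivity) hg
  constructor
  · refine gamma_top s hs0 hs1
      (fun lam => monod a1 b1 (S1 lam) - δ1)
      (fun lam => monod a2 b2 (S2 lam) - δ2) Γ
      (monod a1 b1 Rinf - δ1) (monod a2 b2 Rinf - δ2)
      ((monod_tendsto (by positivity) hS1top).sub tendsto_const_nhds)
      ((monod_tendsto (by positivity) hS2top).sub tendsto_const_nhds) ?_
    filter_upwards [eventually_gt_atTop 0] with lam hlam
    exact hΓeq lam hlam
  · refine gamma_zero s hs0 hs1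
      (fun lam => monod a1 b1 (S1 lam) - δ1)
      (fun lam => monod a2 b2 (S2 lam) - δ2) Γ
      (monod a1 b1 R01 - δ1) (monod a2 b2 R02 - δ2)
      ((monod_tendsto (by positivity) hS1zero).sub tendsto_const_nhds)
      ((monod_tendsto (by positivity) hS2zero).sub tendsto_const_nhds) ?_
    filter_upwards [hmem] with lam hlam
    exact hΓeq lam hlam
end

section
/- Let δ¹, δ² > 0, s ∈ (0,1), R₀¹ < R₀², and let f_w¹, f_w² be Monod functions. For λ > 0 define Λ_w⁰(λ) = (s/δ¹ + (1−s)/δ²) · E[Φ(B_λ)], where B_λ follows a Beta(sλ/δ¹, (1−s)λ/δ²) law and Φ(x) = δ²(1 − x)(f_w¹((R₀² − R₀¹)x + R₀¹) − δ¹) + δ¹ x (f_w²((R₀² − R₀¹)x + R₀¹) − δ²). Then lim_{λ→+∞} Λ_w⁰(λ) = (1−s)(f_w¹(R^∞) − δ¹) + s(f_w²(R^∞) − δ²), where R^∞ = ((1−s)δ¹R₀¹ + sδ²R₀²)/((1−s)δ¹ + sδ²), and lim_{λ→0⁺} Λ_w⁰(λ) = (1−s)(f_w¹(R₀¹) − δ¹)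 + s(f_w²(R₀²) − δ²). -/
open Filter MeasureTheory intervalIntegral

/-- The invasion rate `Λ_w⁰(λ) = (s/δ¹ + (1−s)/δ²) E[Φ(B_λ)]`,
`B_λ ∼ Beta(sλ/δ¹, (1−s)λ/δ²)`, written with the Beta density. -/
noncomputable def invasionRate0 (a1 b1 a2 b2 δ1 δ2 R01 R02 s lam : ℝ) : ℝ :=
  (s / δ1 + (1 - s) / δ2) *
    ((∫ x in (0:ℝ)..1, Phi a1 b1 a2 b2 δ1 δ2 R01 R02 x
        * (x ^ (s * lam / δ1 - 1) * (1 - x) ^ ((1 - s) * lam / δ2 - 1)))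
      / (∫ x in (0:ℝ)..1,
          x ^ (s * lam / δ1 - 1) * (1 - x) ^ ((1 - s) * lam / δ2 - 1)))

/-!
Write `Λ_w⁰(λ) = (p + q) E[Φ(B_λ)]` with `B_λ ∼ Beta(pλ, qλ)`, `p = s/δ¹`, `q = (1-s)/δ²`.
Stein's identity for the Beta law, `E[(α - (α+β)B) f(B) + B(1-B) f'(B)] = 0`, gives
`E[B] = p/(p+q)` for every `λ`, `Var B ≤ 1/(4(p+q)λ)` and `E[B(1-B)] ≤ qλ`. Hence `B_λ`
concentrates at `p/(p+q)` as `λ → ∞`, and on the endpoints (with masses `q/(p+q)` at `0` and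
`p/(p+q)` at `1`) as `λ → 0⁺`. For continuous `g` both statements follow from a bound
`|g x - (a + b x)| ≤ ε + C φ x` on `[0, 1]`, with `φ = (x - p/(p+q))²` resp. `x(1-x)`
vanishing where the affine approximation is exact.
-/

open Set Topology

/-- The unnormalised `Beta(α, β)` density; `betaAvg α β g` is `E[g(B)]` for `B ∼ Beta(α, β)`. -/
noncomputable def betaWeight (α β x : ℝ) : ℝ := x ^ (α - 1) * (1 - x) ^ (β - 1)

noncomputable def betaAvg (α β : ℝ) (g : ℝ → ℝ) : ℝ :=
  (∫ x in (0:ℝ)..1, g x * betaWeight α β x) / ∫ x in (0:ℝ)..1, betaWeight α β x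

section BetaAvg

variable {α β : ℝ}

lemma betaWeight_nonneg {x : ℝ} (hx : x ∈ Icc (0:ℝ) 1) : 0 ≤ betaWeight α β x :=
  mul_nonneg (Real.rpow_nonneg hx.1 _) (Real.rpow_nonneg (sub_nonneg.2 hx.2) _)

lemma betaWeight_one_sub (x : ℝ) : betaWeight α β (1 - x) = betaWeight β α x := by
  simp only [betaWeight, sub_sub_cancel, mul_comm]

lemma intervalIntegrable_mul_betaWeight_zero_half (hα : 0 < α) {g : ℝ → ℝ}
    (hg : ContinuousOn g (Icc 0 (1 / 2))) :
    IntervalIntegrable (fun x => g x * betaWeight α β x) volume 0 (1 / 2) := by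
  have hcont : ContinuousOn (fun x : ℝ => (1 - x) ^ (β - 1) * g x) (uIcc 0 (1 / 2)) := by
    rw [uIcc_of_le (by norm_num)]
    refine ((continuousOn_const.sub continuousOn_id).rpow_const fun x hx => ?_).mul hg
    exact Or.inl (by simp only [Pi.sub_apply, id]; linarith [hx.2])
  have heq : (fun x => g x * betaWeight α β x)
      = fun x => x ^ (α - 1) * ((1 - x) ^ (β - 1) * g x) := by
    funext x
    simp only [betaWeight]
    ring
  rw [heq]
  exact (intervalIntegrable_rpow' (by linarith)).mul_continuousOn hcont

lemma intervalIntegrable_mul_betaWeight (hα : 0 < α) (hβ : 0 < β) {g : ℝ → ℝ}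
    (hg : ContinuousOn g (Icc 0 1)) :
    IntervalIntegrable (fun x => g x * betaWeight α β x) volume 0 1 := by
  have hleft := intervalIntegrable_mul_betaWeight_zero_half (β := β) hα
    (hg.mono (Icc_subset_Icc le_rfl (by norm_num)))
  have hright := (intervalIntegrable_mul_betaWeight_zero_half (β := α) (g := fun x => g (1 - x))
    hβ (hg.comp (continuousOn_const.sub continuousOn_id)
      fun x hx => ⟨by linarith [hx.2], by linarith [hx.1]⟩)).comp_sub_left 1
  norm_num [betaWeight_one_sub] at hright
  exact hleft.trans hright.symm

lemma integral_betaWeight_pos (hα : 0 < α) (hβ : 0 < β) :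
    0 < ∫ x in (0:ℝ)..1, betaWeight α β x := by
  refine intervalIntegral_pos_of_pos_on ?_ (fun x hx => ?_) zero_lt_one
  · simpa using intervalIntegrable_mul_betaWeight hα hβ (g := fun _ => 1) continuousOn_const
  · exact mul_pos (Real.rpow_pos_of_pos hx.1 _) (Real.rpow_pos_of_pos (sub_pos.2 hx.2) _)

lemma betaAvg_const (hα : 0 < α) (hβ : 0 < β) (c : ℝ) : betaAvg α β (fun _ => c) = c := by
  rw [betaAvg, intervalIntegral.integral_const_mul, mul_div_assoc,
    div_self (integral_betaWeight_pos hα hβ).ne', mul_one]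

lemma betaAvg_const_mul (c : ℝ) (g : ℝ → ℝ) :
    betaAvg α β (fun x => c * g x) = c * betaAvg α β g := by
  simp only [betaAvg, mul_assoc, intervalIntegral.integral_const_mul, mul_div_assoc]

lemma betaAvg_add (hα : 0 < α) (hβ : 0 < β) {f g : ℝ → ℝ} (hf : ContinuousOn f (Icc 0 1))
    (hg : ContinuousOn g (Icc 0 1)) :
    betaAvg α β (fun x => f x + g x) = betaAvg α β f + betaAvg α β g := by
  simp only [betaAvg, add_mul]
  rw [integral_add (intervalIntegrable_mul_betaWeight hα hβ hf)
    (intervalIntegrable_mul_betaWeight hα hβ hg), add_div]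

lemma betaAvg_sub (hα : 0 < α) (hβ : 0 < β) {f g : ℝ → ℝ} (hf : ContinuousOn f (Icc 0 1))
    (hg : ContinuousOn g (Icc 0 1)) :
    betaAvg α β (fun x => f x - g x) = betaAvg α β f - betaAvg α β g := by
  simp only [betaAvg, sub_mul]
  rw [integral_sub (intervalIntegrable_mul_betaWeight hα hβ hf)
    (intervalIntegrable_mul_betaWeight hα hβ hg), sub_div]

lemma betaAvg_mono (hα : 0 < α) (hβ : 0 < β) {f g : ℝ → ℝ} (hf : ContinuousOn f (Icc 0 1))
    (hg : ContinuousOn g (Icc 0 1)) (hfg : ∀ x ∈ Icc (0:ℝ) 1, f x ≤ g x) :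
    betaAvg α β f ≤ betaAvg α β g := by
  refine div_le_div_of_nonneg_right (integral_mono_on zero_le_one
    (intervalIntegrable_mul_betaWeight hα hβ hf) (intervalIntegrable_mul_betaWeight hα hβ hg)
    fun x hx => ?_) (integral_betaWeight_pos hα hβ).le
  exact mul_le_mul_of_nonneg_right (hfg x hx) (betaWeight_nonneg hx)

lemma abs_betaAvg_le (hα : 0 < α) (hβ : 0 < β) {f g : ℝ → ℝ} (hf : ContinuousOn f (Icc 0 1))
    (hg : ContinuousOn g (Icc 0 1)) (hfg : ∀ x ∈ Icc (0:ℝ) 1, |f x| ≤ g x) :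
    |betaAvg α β f| ≤ betaAvg α β g := by
  have hneg : betaAvg α β (fun x => -1 * g x) ≤ betaAvg α β f :=
    betaAvg_mono hα hβ (by fun_prop) hf fun x hx => by linarith [neg_le_of_abs_le (hfg x hx)]
  rw [betaAvg_const_mul] at hneg
  exact abs_le.2 ⟨by linarith, betaAvg_mono hα hβ hf hg fun x hx => le_of_abs_le (hfg x hx)⟩

/-- Stein's identity for the Beta law: integrate `(x ^ α * (1 - x) ^ β * f x)'`; the boundary
terms vanish because `α, β > 0`. -/
lemma betaAvg_stein (hα : 0 < α) (hβ : 0 < β) {f f' : ℝ → ℝ}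
    (hf : ContinuousOn f (Icc 0 1)) (hf' : ContinuousOn f' (Icc 0 1))
    (hderiv : ∀ x ∈ Ioo (0:ℝ) 1, HasDerivAt f (f' x) x) :
    betaAvg α β (fun x => (α - (α + β) * x) * f x + x * (1 - x) * f' x) = 0 := by
  have hF : ∀ x ∈ Ioo (0:ℝ) 1, HasDerivAt (fun x => x ^ α * (1 - x) ^ β * f x)
      (((α - (α + β) * x) * f x + x * (1 - x) * f' x) * betaWeight α β x) x := by
    intro x ⟨hx0, hx1⟩
    have h1x : 0 < 1 - x := sub_pos.2 hx1
    have hd := ((Real.hasDerivAt_rpow_const (p := α) (Or.inl hx0.ne')).fun_mul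
      (((hasDerivAt_id x).const_sub 1).rpow_const (p := β) (Or.inl h1x.ne'))).fun_mul
      (hderiv x ⟨hx0, hx1⟩)
    refine hd.congr_deriv ?_
    simp only [betaWeight, id, Real.rpow_sub_one hx0.ne', Real.rpow_sub_one h1x.ne']
    field_simp
    ring
  have hcont : ContinuousOn (fun x => x ^ α * (1 - x) ^ β * f x) (Icc 0 1) :=
    ((continuousOn_id.rpow_const fun _ _ => Or.inr hα.le).mul
      ((continuousOn_const.sub continuousOn_id).rpow_const fun _ _ => Or.inr hβ.le)).mul hf
  rw [betaAvg, integral_eq_sub_of_hasDerivAt_of_le zero_le_one hcont hF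
    (intervalIntegrable_mul_betaWeight hα hβ (by fun_prop))]
  simp [Real.zero_rpow hα.ne', Real.zero_rpow hβ.ne']

lemma betaAvg_id (hα : 0 < α) (hβ : 0 < β) : betaAvg α β (fun x => x) = α / (α + β) := by
  have h := betaAvg_stein hα hβ (f := fun _ => 1) (f' := fun _ => 0) continuousOn_const
    continuousOn_const fun x _ => hasDerivAt_const x 1
  simp only [mul_one, mul_zero, add_zero] at h
  rw [betaAvg_sub hα hβ continuousOn_const (by fun_prop), betaAvg_const hα hβ,
    betaAvg_const_mul] at h
  field_simp
  linarith

lemma betaAvg_sq_sub_mean_le (hα : 0 < α) (hβ : 0 < β) :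
    betaAvg α β (fun x => (x - α / (α + β)) ^ 2) ≤ 1 / (4 * (α + β)) := by
  have hαβ : 0 < α + β := add_pos hα hβ
  have h := betaAvg_stein hα hβ (f := fun x => x - α / (α + β)) (f' := fun _ => 1)
    (by fun_prop) continuousOn_const fun x _ => (hasDerivAt_id x).sub_const _
  have heq : (fun x => (α - (α + β) * x) * (x - α / (α + β)) + x * (1 - x) * 1)
      = fun x => x * (1 - x) - (α + β) * (x - α / (α + β)) ^ 2 := by
    funext x
    field_simp
    ring
  rw [heq, betaAvg_sub hα hβ (by fun_prop) (by fun_prop), betaAvg_const_mul] at h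
  have hquarter : betaAvg α β (fun x => x * (1 - x)) ≤ 1 / 4 := by
    rw [← betaAvg_const hα hβ (1 / 4)]
    exact betaAvg_mono hα hβ (by fun_prop) continuousOn_const
      fun x _ => by nlinarith [sq_nonneg (x - 1 / 2)]
  rw [le_div_iff₀ (by positivity)]
  linarith

lemma betaAvg_mul_one_sub_le (hα : 0 < α) (hβ : 0 < β) :
    betaAvg α β (fun x => x * (1 - x)) ≤ β := by
  have h := betaAvg_stein hα hβ (f := fun x => x) (f' := fun _ => 1)
    (by fun_prop) continuousOn_const fun x _ => hasDerivAt_id x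
  have heq : (fun x => (α - (α + β) * x) * x + x * (1 - x) * 1)
      = fun x => (α + 1) * (x * (1 - x)) - β * x ^ 2 := by
    funext x
    ring
  rw [heq, betaAvg_sub hα hβ (by fun_prop) (by fun_prop), betaAvg_const_mul,
    betaAvg_const_mul] at h
  have hsq : betaAvg α β (fun x => x ^ 2) ≤ 1 := by
    rw [← betaAvg_const hα hβ 1]
    exact betaAvg_mono hα hβ (by fun_prop) continuousOn_const
      fun x hx => pow_le_one₀ hx.1 hx.2
  have hnonneg : 0 ≤ betaAvg α β (fun x => x * (1 - x)) := by
    rw [← betaAvg_const hα hβ 0]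
    exact betaAvg_mono hα hβ continuousOn_const (by fun_prop)
      fun x hx => mul_nonneg hx.1 (sub_nonneg.2 hx.2)
  nlinarith

lemma abs_betaAvg_sub_affine_le (hα : 0 < α) (hβ : 0 < β) {g φ : ℝ → ℝ} {a b ε C : ℝ}
    (hg : ContinuousOn g (Icc 0 1)) (hφ : ContinuousOn φ (Icc 0 1))
    (hbound : ∀ x ∈ Icc (0:ℝ) 1, |g x - (a + b * x)| ≤ ε + C * φ x) :
    |betaAvg α β g - (a + b * (α / (α + β)))| ≤ ε + C * betaAvg α β φ := by
  have hsub : betaAvg α β g - (a + b * (α / (α + β)))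
      = betaAvg α β (fun x => g x - (a + b * x)) := by
    rw [betaAvg_sub hα hβ hg (by fun_prop), betaAvg_add hα hβ continuousOn_const (by fun_prop),
      betaAvg_const hα hβ, betaAvg_const_mul, betaAvg_id hα hβ]
  rw [hsub, ← betaAvg_const_mul, ← betaAvg_const hα hβ ε,
    ← betaAvg_add hα hβ continuousOn_const (by fun_prop)]
  exact abs_betaAvg_le hα hβ (by fun_prop) (by fun_prop) hbound

end BetaAvg

lemma IsCompact.exists_abs_le_add_mul {X : Type*} [TopologicalSpace X] [T2Space X] {K : Set X}
    (hK : IsCompact K) {h φ : X → ℝ} (hh : ContinuousOn h K) (hφ : ContinuousOn φ K)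
    (hφ0 : ∀ x ∈ K, 0 ≤ φ x) (hzero : ∀ x ∈ K, φ x = 0 → h x = 0) {ε : ℝ} (hε : 0 < ε) :
    ∃ C, 0 ≤ C ∧ ∀ x ∈ K, |h x| ≤ ε + C * φ x := by
  set S := K ∩ h ⁻¹' {y | ε ≤ |y|}
  have hS : IsCompact S := hK.of_isClosed_subset
    (hh.preimage_isClosed_of_isClosed hK.isClosed (isClosed_le continuous_const continuous_abs))
    inter_subset_left
  rcases S.eq_empty_or_nonempty with hS0 | hSne
  · refine ⟨0, le_rfl, fun x hx => ?_⟩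
    have : x ∉ S := hS0 ▸ notMem_empty x
    simp only [S, mem_inter_iff, mem_preimage, mem_ofPred_eq, not_and, not_le] at this
    linarith [this hx]
  -- `φ` attains a positive minimum on the compact set `S` where `|h| ≥ ε`.
  obtain ⟨x₀, hx₀, hmin⟩ := hS.exists_isMinOn hSne (hφ.mono inter_subset_left)
  have hφx₀ : 0 < φ x₀ := by
    refine (hφ0 x₀ hx₀.1).lt_of_ne fun h0 => ?_
    have := hx₀.2
    simp only [mem_preimage, mem_ofPred_eq, hzero x₀ hx₀.1 h0.symm, abs_zero] at this
    linarith
  obtain ⟨M, hM⟩ := hK.exists_bound_of_continuousOn hh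
  have hM0 : 0 ≤ M := (norm_nonneg _).trans (hM x₀ hx₀.1)
  refine ⟨M / φ x₀, by positivity, fun x hx => ?_⟩
  by_cases hxε : ε ≤ |h x|
  · calc |h x| ≤ M := hM x hx
      _ = M / φ x₀ * φ x₀ := by field_simp
      _ ≤ M / φ x₀ * φ x := by gcongr; exact hmin ⟨hx, hxε⟩
      _ ≤ ε + M / φ x₀ * φ x := by linarith
  · have : 0 ≤ M / φ x₀ * φ x := mul_nonneg (by positivity) (hφ0 x hx)
    linarith

lemma tendsto_of_forall_abs_sub_le_add_mul {ι : Type*} {l : Filter ι} {u v : ι → ℝ} {c : ℝ}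
    (hv : Tendsto v l (𝓝 0)) (h : ∀ ε > 0, ∃ C, ∀ᶠ i in l, |u i - c| ≤ ε + C * v i) :
    Tendsto u l (𝓝 c) := by
  refine Metric.tendsto_nhds.2 fun ε hε => ?_
  obtain ⟨C, hC⟩ := h (ε / 2) (half_pos hε)
  have hCv : ∀ᶠ i in l, C * v i < ε / 2 := by
    have := hv.const_mul C
    rw [mul_zero] at this
    exact this.eventually (gt_mem_nhds (half_pos hε))
  filter_upwards [hC, hCv] with i h1 h2
  rw [Real.dist_eq]
  linarith

section BetaLimits

variable {p q : ℝ} {g : ℝ → ℝ}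

lemma tendsto_betaAvg_atTop (hp : 0 < p) (hq : 0 < q) (hg : ContinuousOn g (Icc 0 1)) :
    Tendsto (fun lam => betaAvg (p * lam) (q * lam) g) atTop (𝓝 (g (p / (p + q)))) := by
  set m := p / (p + q)
  have hv : Tendsto (fun lam : ℝ => 1 / (4 * ((p + q) * lam))) atTop (𝓝 0) :=
    tendsto_const_nhds.div_atTop
      ((tendsto_id.const_mul_atTop (by positivity)).const_mul_atTop (by norm_num))
  refine tendsto_of_forall_abs_sub_le_add_mul hv fun ε hε => ?_
  obtain ⟨C, hC0, hC⟩ := isCompact_Icc.exists_abs_le_add_mul (h := fun x => g x - g m)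
    (φ := fun x => (x - m) ^ 2) (by fun_prop) (by fun_prop) (fun _ _ => sq_nonneg _)
    (fun x _ hx => by rw [sub_eq_zero.1 (pow_eq_zero_iff two_ne_zero |>.1 hx), sub_self]) hε
  refine ⟨C, ?_⟩
  filter_upwards [eventually_gt_atTop 0] with lam hlam
  have hα : 0 < p * lam := mul_pos hp hlam
  have hβ : 0 < q * lam := mul_pos hq hlam
  have hm : p * lam / (p * lam + q * lam) = m := by
    rw [← add_mul, mul_div_mul_right _ _ hlam.ne']
  have h := abs_betaAvg_sub_affine_le hα hβ hg (φ := fun x => (x - m) ^ 2) (by fun_prop)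
    (a := g m) (b := 0) fun x hx => by simpa using hC x hx
  calc |betaAvg (p * lam) (q * lam) g - g m|
      ≤ ε + C * betaAvg (p * lam) (q * lam) (fun x => (x - m) ^ 2) := by simpa using h
    _ ≤ ε + C * (1 / (4 * ((p + q) * lam))) := by
      have hvar := betaAvg_sq_sub_mean_le hα hβ
      rw [hm, ← add_mul] at hvar
      gcongr

lemma tendsto_betaAvg_nhdsGT_zero (hp : 0 < p) (hq : 0 < q) (hg : ContinuousOn g (Icc 0 1)) :
    Tendsto (fun lam => betaAvg (p * lam) (q * lam) g) (𝓝[>] 0)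
      (𝓝 (g 0 + (g 1 - g 0) * (p / (p + q)))) := by
  have hv : Tendsto (fun lam : ℝ => q * lam) (𝓝[>] 0) (𝓝 0) := by
    have := ((continuous_const_mul q).tendsto 0).mono_left (nhdsWithin_le_nhds (s := Ioi 0))
    rwa [mul_zero] at this
  refine tendsto_of_forall_abs_sub_le_add_mul hv fun ε hε => ?_
  obtain ⟨C, hC0, hC⟩ := isCompact_Icc.exists_abs_le_add_mul
    (h := fun x => g x - (g 0 + (g 1 - g 0) * x)) (φ := fun x => x * (1 - x)) (by fun_prop)
    (by fun_prop) (fun x hx => mul_nonneg hx.1 (sub_nonneg.2 hx.2))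
    (fun x _ hx => by
      rcases mul_eq_zero.1 hx with rfl | hx1
      · simp
      · obtain rfl : x = 1 := (sub_eq_zero.1 hx1).symm
        simp) hε
  refine ⟨C, ?_⟩
  filter_upwards [self_mem_nhdsWithin] with lam (hlam : 0 < lam)
  have hα : 0 < p * lam := mul_pos hp hlam
  have hβ : 0 < q * lam := mul_pos hq hlam
  have hm : p * lam / (p * lam + q * lam) = p / (p + q) := by
    rw [← add_mul, mul_div_mul_right _ _ hlam.ne']
  have h := abs_betaAvg_sub_affine_le hα hβ hg (by fun_prop) hC
  rw [hm] at h
  exact h.trans (by gcongr; exact betaAvg_mul_one_sub_le hα hβ)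

end BetaLimits

lemma continuousOn_Phi {a1 b1 a2 b2 δ1 δ2 R01 R02 : ℝ} (hb1 : 0 < b1) (hb2 : 0 < b2)
    (hR01 : 0 < R01) (hR : R01 < R02) :
    ContinuousOn (Phi a1 b1 a2 b2 δ1 δ2 R01 R02) (Icc 0 1) := by
  have hden : ∀ b, 0 < b → ∀ x ∈ Icc (0:ℝ) 1, b + ((R02 - R01) * x + R01) ≠ 0 :=
    fun b hb x hx => (by nlinarith [mul_nonneg (sub_nonneg.2 hR.le) hx.1] : 0 < b + _).ne'
  unfold Phi monod
  fun_prop (disch := first | exact hden b1 hb1 | exact hden b2 hb2)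

lemma invasionRate0_eq_mul_betaAvg (a1 b1 a2 b2 δ1 δ2 R01 R02 s : ℝ) :
    invasionRate0 a1 b1 a2 b2 δ1 δ2 R01 R02 s = fun lam => (s / δ1 + (1 - s) / δ2) *
      betaAvg (s / δ1 * lam) ((1 - s) / δ2 * lam) (Phi a1 b1 a2 b2 δ1 δ2 R01 R02) := by
  funext lam
  rw [invasionRate0, mul_div_right_comm s, mul_div_right_comm (1 - s)]
  rfl

lemma mul_Phi_at_mean {a1 b1 a2 b2 δ1 δ2 R01 R02 s : ℝ} (hδ1 : 0 < δ1) (hδ2 : 0 < δ2)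
    (hs0 : 0 < s) (hs1 : s < 1) :
    (s / δ1 + (1 - s) / δ2) * Phi a1 b1 a2 b2 δ1 δ2 R01 R02 (s / δ1 / (s / δ1 + (1 - s) / δ2))
      = (1 - s) * (monod a1 b1
          (((1 - s) * δ1 * R01 + s * δ2 * R02) / ((1 - s) * δ1 + s * δ2)) - δ1)
        + s * (monod a2 b2
          (((1 - s) * δ1 * R01 + s * δ2 * R02) / ((1 - s) * δ1 + s * δ2)) - δ2) := by
  have h1s : 0 < 1 - s := sub_pos.2 hs1
  have hD : (1 - s) * δ1 + s * δ2 ≠ 0 := by positivity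
  have hm : s / δ1 / (s / δ1 + (1 - s) / δ2) = s * δ2 / ((1 - s) * δ1 + s * δ2) := by
    field_simp
    ring
  have hR : (R02 - R01) * (s * δ2 / ((1 - s) * δ1 + s * δ2)) + R01
      = ((1 - s) * δ1 * R01 + s * δ2 * R02) / ((1 - s) * δ1 + s * δ2) := by
    field_simp
    ring
  rw [hm, Phi, hR]
  field_simp
  ring

lemma mul_Phi_interpolate_endpoints {a1 b1 a2 b2 δ1 δ2 R01 R02 s : ℝ} (hδ1 : 0 < δ1)
    (hδ2 : 0 < δ2) (hs0 : 0 < s) (hs1 : s < 1) :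
    (s / δ1 + (1 - s) / δ2) * (Phi a1 b1 a2 b2 δ1 δ2 R01 R02 0
        + (Phi a1 b1 a2 b2 δ1 δ2 R01 R02 1 - Phi a1 b1 a2 b2 δ1 δ2 R01 R02 0)
          * (s / δ1 / (s / δ1 + (1 - s) / δ2)))
      = (1 - s) * (monod a1 b1 R01 - δ1) + s * (monod a2 b2 R02 - δ2) := by
  have h1s : 0 < 1 - s := sub_pos.2 hs1
  have hpq : s / δ1 + (1 - s) / δ2 ≠ 0 := by positivity
  simp only [Phi, mul_zero, mul_one, zero_add, sub_add_cancel]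
  field_simp
  ring

theorem stmt13_general (a1 b1 a2 b2 δ1 δ2 R01 R02 s : ℝ)
    (hb1 : 0 < b1) (hb2 : 0 < b2)
    (hδ1 : 0 < δ1) (hδ2 : 0 < δ2)
    (hR01 : 0 < R01) (hR : R01 < R02) (hs0 : 0 < s) (hs1 : s < 1) :
    Tendsto (invasionRate0 a1 b1 a2 b2 δ1 δ2 R01 R02 s) atTop (nhds
      ((1 - s) * (monod a1 b1
          (((1 - s) * δ1 * R01 + s * δ2 * R02) / ((1 - s) * δ1 + s * δ2)) - δ1)
        + s * (monod a2 b2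
          (((1 - s) * δ1 * R01 + s * δ2 * R02) / ((1 - s) * δ1 + s * δ2)) - δ2))) ∧
    Tendsto (invasionRate0 a1 b1 a2 b2 δ1 δ2 R01 R02 s)
      (nhdsWithin 0 (Set.Ioi 0)) (nhds
      ((1 - s) * (monod a1 b1 R01 - δ1) + s * (monod a2 b2 R02 - δ2))) := by
  have hp : 0 < s / δ1 := div_pos hs0 hδ1
  have hq : 0 < (1 - s) / δ2 := div_pos (sub_pos.2 hs1) hδ2
  have hΦ := continuousOn_Phi (a1 := a1) (a2 := a2) (δ1 := δ1) (δ2 := δ2) hb1 hb2 hR01 hR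
  rw [invasionRate0_eq_mul_betaAvg]
  constructor
  · rw [← mul_Phi_at_mean hδ1 hδ2 hs0 hs1]
    exact (tendsto_betaAvg_atTop hp hq hΦ).const_mul _
  · rw [← mul_Phi_interpolate_endpoints hδ1 hδ2 hs0 hs1]
    exact (tendsto_betaAvg_nhdsGT_zero hp hq hΦ).const_mul _

/-- Limits of the probabilistic invasion rate `Λ_w⁰(λ)` as `λ → +∞`
and `λ → 0⁺`. -/
theorem stmt13 (a1 b1 a2 b2 δ1 δ2 R01 R02 s : ℝ)
    (ha1 : 0 < a1) (hb1 : 0 < b1) (ha2 : 0 < a2) (hb2 : 0 < b2)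
    (hδ1 : 0 < δ1) (hδ2 : 0 < δ2)
    (hR01 : 0 < R01) (hR : R01 < R02) (hs0 : 0 < s) (hs1 : s < 1) :
    Tendsto (invasionRate0 a1 b1 a2 b2 δ1 δ2 R01 R02 s) atTop (nhds
      ((1 - s) * (monod a1 b1
          (((1 - s) * δ1 * R01 + s * δ2 * R02) / ((1 - s) * δ1 + s * δ2)) - δ1)
        + s * (monod a2 b2
          (((1 - s) * δ1 * R01 + s * δ2 * R02) / ((1 - s) * δ1 + s * δ2)) - δ2))) ∧
    Tendsto (invasionRate0 a1 b1 a2 b2 δ1 δ2 R01 R02 s)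
      (nhdsWithin 0 (Set.Ioi 0)) (nhds
      ((1 - s) * (monod a1 b1 R01 - δ1) + s * (monod a2 b2 R02 - δ2))) :=
  stmt13_general a1 b1 a2 b2 δ1 δ2 R01 R02 s hb1 hb2 hδ1 hδ2 hR01 hR hs0 hs1
end

section
/- Set X_wʲ(r) = f_wʲ(r) − δʲ, D_w = {r ∈ [0, R₀] : X_w¹(r) − λ¹ < 0}, and g_w(r) = R₀ + (R₀ − r)(X_w¹(r) − λ¹)/λ¹. Then g_w is strictly increasing on D_w. Moreover, if the semi-trivial stationary equilibrium E_w = (W¹, W²) ∈ (0,∞)² of the one-species reduced gradostat W(f_w(R₀ − W) − δ) + λKW = 0 exists, then its associated resource vector R_w = (R₀ − W¹, R₀ − W²) satisfies g_w(R_w¹) = R_w². -/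
/-- `X_wʲ(r) = f_wʲ(r) − δʲ`. -/
noncomputable def Xfun (a b d r : ℝ) : ℝ := monod a b r - d

/-- `g_w(r) = R₀ + (R₀ − r)(X_w¹(r) − λ¹)/λ¹`. -/
noncomputable def gw (a1 b1 δ1 l1 R0 r : ℝ) : ℝ :=
  R0 + (R0 - r) * (Xfun a1 b1 δ1 r - l1) / l1

lemma monod_strict (a b : ℝ) (ha : 0 < a) (hb : 0 < b) {x y : ℝ}
    (hx : 0 ≤ x) (hxy : x < y) : monod a b x < monod a b y := by
  unfold monod
  rw [div_lt_div_iff₀ (by linarith) (by linarith)]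
  nlinarith [mul_pos (mul_pos ha hb) (sub_pos.2 hxy)]

/-- `g_w` is strictly increasing on `D_w`, and if the semi-trivial
equilibrium `E_w` exists then its resource vector `R_w = R₀ − W` satisfies
`g_w(R_w¹) = R_w²`. -/
theorem stmt15 (a1 b1 a2 b2 δ1 δ2 R0 s lam : ℝ)
    (ha1 : 0 < a1) (hb1 : 0 < b1) (ha2 : 0 < a2) (hb2 : 0 < b2)
    (hδ1 : 0 < δ1) (hδ2 : 0 < δ2) (hR0 : 0 < R0)
    (hs0 : 0 < s) (hs1 : s < 1) (hlam : 0 < lam) :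
    StrictMonoOn (gw a1 b1 δ1 (s * lam) R0)
      {r ∈ Set.Icc 0 R0 | Xfun a1 b1 δ1 r - s * lam < 0} ∧
    (∀ W : ℝ × ℝ, 0 < W.1 → 0 < W.2 →
      W.1 * (Xfun a1 b1 δ1 (R0 - W.1)) + lam * (-s * W.1 + s * W.2) = 0 →
      W.2 * (Xfun a2 b2 δ2 (R0 - W.2)) + lam * ((1 - s) * W.1 + (s - 1) * W.2) = 0 →
      gw a1 b1 δ1 (s * lam) R0 (R0 - W.1) = R0 - W.2) := by
  have hl : 0 < s * lam := mul_pos hs0 hlam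
  constructor
  · intro x hx y hy hxy
    obtain ⟨⟨hx0, hxR⟩, hxD⟩ := hx
    obtain ⟨⟨hy0, hyR⟩, hyD⟩ := hy
    have hX : Xfun a1 b1 δ1 x < Xfun a1 b1 δ1 y := by
      unfold Xfun
      have := monod_strict a1 b1 ha1 hb1 hx0 hxy
      linarith
    -- u1 = R0 - x > u2 = R0 - y ≥ 0, v1 = l - X x > v2 = l - X y > 0
    have key : (R0 - y) * (s * lam - Xfun a1 b1 δ1 y) <
        (R0 - x) * (s * lam - Xfun a1 b1 δ1 x) := by
      nlinarith [hxD, hyD]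
    have hAB : (R0 - x) * (Xfun a1 b1 δ1 x - s * lam) <
        (R0 - y) * (Xfun a1 b1 δ1 y - s * lam) := by nlinarith [key]
    unfold gw
    have h2 : (R0 - x) * (Xfun a1 b1 δ1 x - s * lam) / (s * lam) <
        (R0 - y) * (Xfun a1 b1 δ1 y - s * lam) / (s * lam) := by
      apply div_lt_div_of_pos_right hAB hl
    linarith
  · rintro ⟨W1, W2⟩ hW1 hW2 h1 _
    simp only at h1 ⊢
    unfold gw
    have hX : W1 * Xfun a1 b1 δ1 (R0 - W1) = lam * s * (W1 - W2) := by linarith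
    field_simp
    nlinarith [hX]
end
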